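/- arXiv:2406.15892 — 10 statements merged into one kernel-verified Lean document; each statement's English description precedes it below -/
import Mathlib

section
/- Let ε = (ε_n) be a sequence in (0,1] and let A^ε = {(x_n) ∈ ℂ^ℕ : sup_n |x_n|^{ε_n} < ∞} with norm ‖(x_n)‖ = sup_n |x_n|^{ε_n}. Then an element x = (x_n) ∈ A^ε is a unit if and only if there exists M > 1 such that 1/M ≤ |x_n|^{ε_n} ≤ M for all n. -/
theorem exists_one_lt_forall_one_div_le_and_le {ι : Type*} {f : ι → ℝ} (hf : ∀ i, 0 < f i)
    {A B : ℝ} (hA : ∀ i, f i ≤ A) (hB : ∀ i, (f i)⁻¹ ≤ B) :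
    ∃ M : ℝ, 1 < M ∧ ∀ i, 1 / M ≤ f i ∧ f i ≤ M := by
  refine ⟨max (max A B) 2, by simp, fun i => ⟨?_, ?_⟩⟩
  · rw [one_div, inv_le_comm₀ (by positivity) (hf i)]
    exact (hB i).trans ((le_max_right A B).trans (le_max_left _ _))
  · exact (hA i).trans ((le_max_left A B).trans (le_max_left _ _))

theorem rpow_norm_pos_iff {E : Type*} [NormedAddCommGroup E] (a : E) {e : ℝ} (he : e ≠ 0) :
    0 < ‖a‖ ^ e ↔ a ≠ 0 := by
  rw [← norm_pos_iff, (Real.rpow_nonneg (norm_nonneg a) e).lt_iff_ne', (norm_nonneg a).lt_iff_ne',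
    Ne, Ne, Real.rpow_eq_zero (norm_nonneg a) he]

theorem norm_inv_rpow {𝕜 : Type*} [NormedDivisionRing 𝕜] (a : 𝕜) (e : ℝ) :
    ‖a⁻¹‖ ^ e = (‖a‖ ^ e)⁻¹ := by
  rw [norm_inv, Real.inv_rpow (norm_nonneg a)]

/-- In the product Banach ring A^ε = {(x_n) ∈ ℂ^ℕ : sup_n |x_n|^{ε_n} < ∞}, an element
x is a unit (has an inverse lying in A^ε) if and only if there exists M > 1 with
1/M ≤ |x_n|^{ε_n} ≤ M for all n. -/
theorem stmt_6 (ε : ℕ → ℝ) (hε : ∀ n, ε n ∈ Set.Ioc (0 : ℝ) 1) (x : ℕ → ℂ)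
    (hx : ∃ M : ℝ, ∀ n, ‖x n‖ ^ ε n ≤ M) :
    (∃ y : ℕ → ℂ, (∃ M : ℝ, ∀ n, ‖y n‖ ^ ε n ≤ M) ∧ ∀ n, x n * y n = 1) ↔
      ∃ M : ℝ, 1 < M ∧ ∀ n, 1 / M ≤ ‖x n‖ ^ ε n ∧
        ‖x n‖ ^ ε n ≤ M := by
  obtain ⟨A, hA⟩ := hx
  constructor
  · rintro ⟨y, ⟨B, hB⟩, hxy⟩
    have hy n : y n = (x n)⁻¹ := eq_inv_of_mul_eq_one_right (hxy n)
    have hx0 n : x n ≠ 0 := left_ne_zero_of_mul_eq_one (hxy n)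
    refine exists_one_lt_forall_one_div_le_and_le
      (fun n => (rpow_norm_pos_iff _ (hε n).1.ne').2 (hx0 n)) hA (B := B) fun n => ?_
    rw [← norm_inv_rpow, ← hy]
    exact hB n
  · rintro ⟨M, hM, hbound⟩
    have hM0 : 0 < M := one_pos.trans hM
    have hpos n : 0 < ‖x n‖ ^ ε n := (one_div_pos.2 hM0).trans_le (hbound n).1
    have hx0 n : x n ≠ 0 := (rpow_norm_pos_iff _ (hε n).1.ne').1 (hpos n)
    refine ⟨fun n => (x n)⁻¹, ⟨M, fun n => ?_⟩, fun n => mul_inv_cancel₀ (hx0 n)⟩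
    rw [norm_inv_rpow, inv_le_comm₀ (hpos n) hM0, ← one_div]
    exact (hbound n).1
end

section
/- Let ε, ε' be sequences in (0,1] and define A^ε = {(x_n) ∈ ℂ^ℕ : sup_n |x_n|^{ε_n} < ∞} and similarly A^{ε'}. Then A^ε ⊆ A^{ε'} if and only if there exists C > 0 such that ε'_n ≤ C ε_n for all n. In particular A^ε = A^{ε'} if and only if the sequences ε and ε' are comparable up to multiplicative constants in both directions. -/
/-!
If `ε' ≤ C ε`, then `‖x_n‖ ^ ε'_n ≤ max 1 ((‖x_n‖ ^ ε_n) ^ C)`, so boundedness transfers.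
Conversely, the sequence with `‖x_n‖ = exp (1 / ε_n)` has `‖x_n‖ ^ ε_n = e`, while
`‖x_n‖ ^ ε'_n = exp (ε'_n / ε_n)`; its boundedness forces `ε'_n / ε_n` to be bounded.
-/

open Real

variable {ι E : Type*}

lemma rpow_le_max_one_rpow_of_le_mul {r a b C : ℝ} (hr : 0 ≤ r) (ha : 0 ≤ a)
    (hab : a ≤ C * b) : r ^ a ≤ max 1 ((r ^ b) ^ C) := by
  rcases le_or_gt r 1 with hr1 | hr1
  · exact (rpow_le_one hr hr1 ha).trans (le_max_left _ _)
  · calc r ^ a ≤ r ^ (b * C) := rpow_le_rpow_of_exponent_le hr1.le (by linarith)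
      _ = (r ^ b) ^ C := rpow_mul hr b C
      _ ≤ max 1 ((r ^ b) ^ C) := le_max_right _ _

/-- The set `A^ε` of the statement. -/
def rpowBoundedSet (E : Type*) [Norm E] (ε : ι → ℝ) : Set (ι → E) :=
  {x | ∃ M : ℝ, ∀ i, ‖x i‖ ^ ε i ≤ M}

lemma rpowBoundedSet_subset_of_le_mul [SeminormedAddGroup E] {ε ε' : ι → ℝ} {C : ℝ}
    (hε' : ∀ i, 0 ≤ ε' i) (hC : 0 ≤ C) (hle : ∀ i, ε' i ≤ C * ε i) :
    rpowBoundedSet E ε ⊆ rpowBoundedSet E ε' := by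
  rintro x ⟨M, hM⟩
  refine ⟨max 1 (M ^ C), fun i => ?_⟩
  calc ‖x i‖ ^ ε' i ≤ max 1 ((‖x i‖ ^ ε i) ^ C) :=
        rpow_le_max_one_rpow_of_le_mul (norm_nonneg _) (hε' i) (hle i)
    _ ≤ max 1 (M ^ C) := by
        gcongr
        exact hM i

lemma exists_le_mul_of_rpowBoundedSet_subset [NormedAddCommGroup E] [NormedSpace ℝ E]
    [Nontrivial E] {ε ε' : ι → ℝ} (hε : ∀ i, 0 < ε i)
    (hsub : rpowBoundedSet E ε ⊆ rpowBoundedSet E ε') :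
    ∃ C : ℝ, 0 < C ∧ ∀ i, ε' i ≤ C * ε i := by
  choose x hx using fun i => exists_norm_eq E (exp_pos (ε i)⁻¹).le
  have hpow : ∀ {δ : ι → ℝ} i, ‖x i‖ ^ δ i = exp (δ i / ε i) := fun i => by
    rw [hx, ← exp_mul, inv_mul_eq_div]
  have hmem : x ∈ rpowBoundedSet E ε :=
    ⟨exp 1, fun i => by rw [hpow, div_self (hε i).ne']⟩
  obtain ⟨M, hM⟩ := hsub hmem
  refine ⟨max (log M) 1, by positivity, fun i => ?_⟩
  have hquot : ε' i / ε i ≤ log M := by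
    rw [← exp_le_exp, exp_log ((exp_pos _).trans_le (hpow i ▸ hM i))]
    exact hpow i ▸ hM i
  calc ε' i ≤ log M * ε i := (div_le_iff₀ (hε i)).1 hquot
    _ ≤ max (log M) 1 * ε i := by gcongr; exacts [(hε i).le, le_max_left _ _]

lemma rpowBoundedSet_subset_iff [NormedAddCommGroup E] [NormedSpace ℝ E] [Nontrivial E]
    {ε ε' : ι → ℝ} (hε : ∀ i, 0 < ε i) (hε' : ∀ i, 0 ≤ ε' i) :
    rpowBoundedSet E ε ⊆ rpowBoundedSet E ε' ↔ ∃ C : ℝ, 0 < C ∧ ∀ i, ε' i ≤ C * ε i :=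
  ⟨exists_le_mul_of_rpowBoundedSet_subset hε,
    fun ⟨_, hC, hle⟩ => rpowBoundedSet_subset_of_le_mul hε' hC.le hle⟩

/-- For sequences ε, ε' in (0,1], A^ε ⊆ A^{ε'} iff ε'_n ≤ C ε_n for some C > 0; and
A^ε = A^{ε'} iff the two sequences are comparable in both directions. -/
theorem stmt_7 (ε ε' : ℕ → ℝ) (hε : ∀ n, ε n ∈ Set.Ioc (0 : ℝ) 1)
    (hε' : ∀ n, ε' n ∈ Set.Ioc (0 : ℝ) 1) :
    ({x : ℕ → ℂ | ∃ M : ℝ, ∀ n, ‖x n‖ ^ ε n ≤ M} ⊆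
        {x : ℕ → ℂ | ∃ M : ℝ, ∀ n, ‖x n‖ ^ ε' n ≤ M} ↔
      ∃ C : ℝ, 0 < C ∧ ∀ n, ε' n ≤ C * ε n) ∧
    ({x : ℕ → ℂ | ∃ M : ℝ, ∀ n, ‖x n‖ ^ ε n ≤ M} =
        {x : ℕ → ℂ | ∃ M : ℝ, ∀ n, ‖x n‖ ^ ε' n ≤ M} ↔
      ((∃ C : ℝ, 0 < C ∧ ∀ n, ε' n ≤ C * ε n) ∧
        (∃ C : ℝ, 0 < C ∧ ∀ n, ε n ≤ C * ε' n))) := by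
  have hsub : rpowBoundedSet ℂ ε ⊆ rpowBoundedSet ℂ ε' ↔ _ :=
    rpowBoundedSet_subset_iff (fun n => (hε n).1) (fun n => (hε' n).1.le)
  have hsup : rpowBoundedSet ℂ ε' ⊆ rpowBoundedSet ℂ ε ↔ _ :=
    rpowBoundedSet_subset_iff (fun n => (hε' n).1) (fun n => (hε n).1.le)
  exact ⟨hsub, Set.Subset.antisymm_iff.trans (and_congr hsub hsup)⟩
end

section
/- Let ε = (ε_n) be a sequence in (0,1], A^ε the product Banach ring of sequences (x_n) ∈ ℂ^ℕ with sup_n |x_n|^{ε_n} < ∞, and ω a non-principal ultrafilter on ℕ with lim_ω ε_n = 0. Then the ideal ker(ω) = {(x_n) ∈ A^ε : lim_ω |x_n|^{ε_n} = 0} is a maximal ideal of A^ε, so the quotient H(ω) = A^ε / ker(ω) is a field. -/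
private lemma add_rpow_le {a b p : ℝ} (ha : 0 ≤ a) (hb : 0 ≤ b) (hp : 0 ≤ p)
    (hp1 : p ≤ 1) : (a + b) ^ p ≤ a ^ p + b ^ p := by
  lift a to NNReal using ha
  lift b to NNReal using hb
  have := NNReal.rpow_add_le_add_rpow a b hp hp1
  exact_mod_cast this

/-- The product Banach ring A^ε of sequences (x_n) ∈ ℂ^ℕ with sup_n |x_n|^{ε_n} < ∞,
as a subring of ℂ^ℕ. -/
def Aeps (ε : ℕ → ℝ) (hε : ∀ n, ε n ∈ Set.Ioc (0 : ℝ) 1) : Subring (ℕ → ℂ) where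
  carrier := {x | ∃ M : ℝ, ∀ n, ‖x n‖ ^ ε n ≤ M}
  zero_mem' := ⟨1, fun n => by
    simp [Real.zero_rpow (ne_of_gt (hε n).1)]⟩
  one_mem' := ⟨1, fun n => by simp⟩
  neg_mem' := by
    rintro x ⟨M, hM⟩
    exact ⟨M, fun n => by simpa using hM n⟩
  add_mem' := by
    rintro x y ⟨M, hM⟩ ⟨N, hN⟩
    refine ⟨M + N, fun n => ?_⟩
    calc ‖(x + y) n‖ ^ ε n
        ≤ (‖x n‖ + ‖y n‖) ^ ε n := by
          apply Real.rpow_le_rpow (norm_nonneg _) _ (le_of_lt (hε n).1)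
          exact norm_add_le _ _
      _ ≤ ‖x n‖ ^ ε n + ‖y n‖ ^ ε n :=
          add_rpow_le (norm_nonneg _) (norm_nonneg _)
            (le_of_lt (hε n).1) (hε n).2
      _ ≤ M + N := add_le_add (hM n) (hN n)
  mul_mem' := by
    rintro x y ⟨M, hM⟩ ⟨N, hN⟩
    refine ⟨M * N, fun n => ?_⟩
    have hMnn : (0 : ℝ) ≤ M :=
      le_trans (Real.rpow_nonneg (norm_nonneg _) _) (hM 0)
    calc ‖(x * y) n‖ ^ ε n
        = ‖x n‖ ^ ε n * ‖y n‖ ^ ε n := by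
          rw [Pi.mul_apply, norm_mul,
            Real.mul_rpow (norm_nonneg _) (norm_nonneg _)]
      _ ≤ M * N :=
          mul_le_mul (hM n) (hN n) (Real.rpow_nonneg (norm_nonneg _) _) hMnn

/-!
An element `x` of `A^ε` outside `ker(ω)` has `|x_n|^{ε_n} → L > 0` along `ω`, since bounded
real sequences converge along ultrafilters. Hence `|x_n|^{ε_n} > L/2` on a set `S ∈ ω`, and the
sequence equal to `x_n⁻¹` on `S` and to `0` off `S` lies in `A^ε` (with bound `2/L`) and is an
inverse of `x` modulo `ker(ω)`.
-/

open Filter Topology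

lemma Ideal.isMaximal_of_exists_mul_sub_one_mem {R : Type*} [CommRing R] {I : Ideal R}
    (h1 : (1 : R) ∉ I) (hinv : ∀ x ∉ I, ∃ y, x * y - 1 ∈ I) : I.IsMaximal := by
  refine Ideal.isMaximal_iff.2 ⟨h1, fun J x hIJ hxI hxJ => ?_⟩
  obtain ⟨y, hy⟩ := hinv x hxI
  have h : (1 : R) = x * y - (x * y - 1) := by ring
  exact h ▸ J.sub_mem (J.mul_mem_right y hxJ) (hIJ hy)

lemma rpow_norm_add_le {E : Type*} [SeminormedAddGroup E] {p : ℝ} (hp0 : 0 ≤ p) (hp1 : p ≤ 1)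
    (a b : E) : ‖a + b‖ ^ p ≤ ‖a‖ ^ p + ‖b‖ ^ p :=
  (Real.rpow_le_rpow (norm_nonneg _) (norm_add_le a b) hp0).trans
    (Real.rpow_add_le_add_rpow (norm_nonneg _) (norm_nonneg _) hp0 hp1)

lemma Ultrafilter.exists_tendsto_of_mem_Icc {α : Type*} (ω : Ultrafilter α) {a : α → ℝ}
    {M : ℝ} (ha : ∀ i, a i ∈ Set.Icc 0 M) : ∃ L ∈ Set.Icc 0 M, Tendsto a ω (𝓝 L) :=
  isCompact_Icc.ultrafilter_le_nhds (ω.map a)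
    (le_principal_iff.2 (mem_map.2 (univ_mem' ha)))

namespace Aeps

variable {ε : ℕ → ℝ} {hε : ∀ n, ε n ∈ Set.Ioc (0 : ℝ) 1}

lemma exists_rpow_norm_mem_Icc (x : Aeps ε hε) : ∃ M, ∀ n, ‖(x : ℕ → ℂ) n‖ ^ ε n ∈ Set.Icc 0 M := by
  obtain ⟨M, hM⟩ := x.2
  exact ⟨M, fun n => ⟨by positivity, hM n⟩⟩

lemma rpow_norm_mul (x y : Aeps ε hε) (n : ℕ) :
    ‖((x * y : Aeps ε hε) : ℕ → ℂ) n‖ ^ ε n =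
      ‖(x : ℕ → ℂ) n‖ ^ ε n * ‖(y : ℕ → ℂ) n‖ ^ ε n := by
  rw [Subring.coe_mul, Pi.mul_apply, norm_mul, Real.mul_rpow (norm_nonneg _) (norm_nonneg _)]

variable (ε hε) in
def tendstoZeroIdeal (l : Filter ℕ) : Ideal (Aeps ε hε) where
  carrier := {x | Tendsto (fun n => ‖(x : ℕ → ℂ) n‖ ^ ε n) l (𝓝 0)}
  zero_mem' := by
    simpa [Real.zero_rpow (hε _).1.ne'] using tendsto_const_nhds (x := (0 : ℝ)) (f := l)
  add_mem' {x y} hx hy := by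
    refine squeeze_zero (fun n => by positivity)
      (fun n => rpow_norm_add_le (hε n).1.le (hε n).2 _ _) ?_
    simpa using hx.add hy
  smul_mem' c x hx := by
    obtain ⟨M, hM⟩ := c.2
    refine squeeze_zero (fun n => by positivity) (fun n => ?_) (by simpa using hx.const_mul M)
    rw [smul_eq_mul, rpow_norm_mul]
    exact mul_le_mul_of_nonneg_right (hM n) (by positivity)

lemma mem_tendstoZeroIdeal {l : Filter ℕ} {x : Aeps ε hε} :
    x ∈ tendstoZeroIdeal ε hε l ↔ Tendsto (fun n => ‖(x : ℕ → ℂ) n‖ ^ ε n) l (𝓝 0) :=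
  Iff.rfl

lemma mem_tendstoZeroIdeal_of_eventually_eq_zero {l : Filter ℕ} {x : Aeps ε hε}
    (hx : ∀ᶠ n in l, (x : ℕ → ℂ) n = 0) : x ∈ tendstoZeroIdeal ε hε l := by
  refine tendsto_const_nhds.congr' ?_
  filter_upwards [hx] with n hn
  rw [hn, norm_zero, Real.zero_rpow (hε n).1.ne']

lemma one_notMem_tendstoZeroIdeal {l : Filter ℕ} [l.NeBot] :
    (1 : Aeps ε hε) ∉ tendstoZeroIdeal ε hε l := by
  intro h
  have h1 : Tendsto (fun _ : ℕ => (1 : ℝ)) l (𝓝 0) := by simpa using mem_tendstoZeroIdeal.1 h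
  exact one_ne_zero (tendsto_nhds_unique tendsto_const_nhds h1)

noncomputable def truncInv (x : Aeps ε hε) {δ : ℝ} (hδ : 0 < δ) : Aeps ε hε :=
  ⟨fun n => if δ < ‖(x : ℕ → ℂ) n‖ ^ ε n then ((x : ℕ → ℂ) n)⁻¹ else 0, δ⁻¹, fun n => by
    dsimp only
    split_ifs with hn
    · rw [norm_inv, Real.inv_rpow (norm_nonneg _)]
      exact inv_anti₀ hδ hn.le
    · rw [norm_zero, Real.zero_rpow (hε n).1.ne']
      positivity⟩

lemma mul_truncInv_apply (x : Aeps ε hε) {δ : ℝ} (hδ : 0 < δ) {n : ℕ}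
    (hn : δ < ‖(x : ℕ → ℂ) n‖ ^ ε n) : ((x * truncInv x hδ : Aeps ε hε) : ℕ → ℂ) n = 1 := by
  have hx : (x : ℕ → ℂ) n ≠ 0 := by
    intro h
    rw [h, norm_zero, Real.zero_rpow (hε n).1.ne'] at hn
    linarith
  simp only [truncInv, Subring.coe_mul, Pi.mul_apply, if_pos hn, mul_inv_cancel₀ hx]

lemma exists_mul_sub_one_mem_tendstoZeroIdeal {ω : Ultrafilter ℕ} {x : Aeps ε hε}
    (hx : x ∉ tendstoZeroIdeal ε hε ω) :
    ∃ y, x * y - 1 ∈ tendstoZeroIdeal ε hε ω := by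
  obtain ⟨M, hM⟩ := exists_rpow_norm_mem_Icc x
  obtain ⟨L, hLM, hL⟩ := ω.exists_tendsto_of_mem_Icc hM
  have hL0 : 0 < L := hLM.1.lt_of_ne fun h => hx (mem_tendstoZeroIdeal.2 (h ▸ hL))
  refine ⟨truncInv x (half_pos hL0), mem_tendstoZeroIdeal_of_eventually_eq_zero ?_⟩
  filter_upwards [hL (Ioi_mem_nhds (half_lt_self hL0))] with n hn
  change ((x * truncInv x _ : Aeps ε hε) : ℕ → ℂ) n - 1 = 0
  rw [mul_truncInv_apply x _ hn, sub_self]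

lemma isMaximal_tendstoZeroIdeal (ω : Ultrafilter ℕ) : (tendstoZeroIdeal ε hε ω).IsMaximal :=
  Ideal.isMaximal_of_exists_mul_sub_one_mem one_notMem_tendstoZeroIdeal
    fun _ => exists_mul_sub_one_mem_tendstoZeroIdeal

end Aeps

theorem stmt_8_general (ε : ℕ → ℝ) (hε : ∀ n, ε n ∈ Set.Ioc (0 : ℝ) 1) (ω : Ultrafilter ℕ) :
    ∃ I : Ideal (Aeps ε hε),
      (∀ x : Aeps ε hε, x ∈ I ↔
        Filter.Tendsto (fun n => ‖(x : ℕ → ℂ) n‖ ^ ε n) ω (nhds 0)) ∧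
      I.IsMaximal ∧ IsField ((Aeps ε hε) ⧸ I) :=
  have hmax := Aeps.isMaximal_tendstoZeroIdeal (hε := hε) ω
  ⟨_, fun _ => Aeps.mem_tendstoZeroIdeal, hmax,
    (Ideal.Quotient.maximal_ideal_iff_isField_quotient _).1 hmax⟩

/-- For a non-principal ultrafilter ω with lim_ω ε_n = 0, the set
ker(ω) = {x ∈ A^ε : lim_ω |x_n|^{ε_n} = 0} is a maximal ideal of A^ε, so the quotient
H(ω) = A^ε/ker(ω) is a field. -/
theorem stmt_8 (ε : ℕ → ℝ) (hε : ∀ n, ε n ∈ Set.Ioc (0 : ℝ) 1) (ω : Ultrafilter ℕ)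
    (hnp : ∀ n : ℕ, ω ≠ pure n)
    (h0 : Filter.Tendsto ε ω (nhds 0)) :
    ∃ I : Ideal (Aeps ε hε),
      (∀ x : Aeps ε hε, x ∈ I ↔
        Filter.Tendsto (fun n => ‖(x : ℕ → ℂ) n‖ ^ ε n) ω (nhds 0)) ∧
      I.IsMaximal ∧ IsField ((Aeps ε hε) ⧸ I) :=
  stmt_8_general ε hε ω
end

section
/- Let ε = (ε_n) be a sequence in (0,1] and ω an ultrafilter on ℕ with lim_ω ε_n = 0. Then the seminorm |(x_n)|_ω = lim_ω |x_n|^{ε_n} on A^ε induces a non-Archimedean absolute value on the residue field H(ω) = A^ε/ker(ω); in particular |2|_ω = 1 and the ultrametric inequality |x + y|_ω ≤ max(|x|_ω, |y|_ω) holds. -/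
open Filter Topology

/-
Since `‖x + y‖ ≤ 2 max (‖x‖, ‖y‖)`, raising to the power `ε n ≥ 0` gives
`‖x + y‖ ^ ε n ≤ 2 ^ ε n · max (‖x‖ ^ ε n, ‖y‖ ^ ε n)`, and the factor `2 ^ ε n` tends to `1`
along `ω` because `ε n → 0`: the Archimedean constant is flattened away in the limit.
Multiplicativity holds termwise, before passing to the limit.
-/

lemma norm_add_rpow_le_two_rpow_mul_max {E : Type*} [SeminormedAddGroup E] (a b : E) {p : ℝ}
    (hp : 0 ≤ p) : ‖a + b‖ ^ p ≤ 2 ^ p * max (‖a‖ ^ p) (‖b‖ ^ p) := by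
  rw [← Real.rpow_max (norm_nonneg a) (norm_nonneg b) hp,
    ← Real.mul_rpow zero_le_two (le_max_of_le_left (norm_nonneg a))]
  have : ‖a + b‖ ≤ 2 * max ‖a‖ ‖b‖ := by
    linarith [norm_add_le a b, le_max_left ‖a‖ ‖b‖, le_max_right ‖a‖ ‖b‖]
  gcongr

lemma tendsto_const_rpow_of_tendsto_zero {α : Type*} {l : Filter α} {ε : α → ℝ} {c : ℝ}
    (hc : c ≠ 0) (h0 : Tendsto ε l (𝓝 0)) : Tendsto (fun n => c ^ ε n) l (𝓝 1) := by
  simpa [Function.comp_def] using (Real.continuousAt_const_rpow hc).tendsto.comp h0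

lemma le_max_of_tendsto_norm_add_rpow {α E : Type*} [SeminormedAddGroup E] {l : Filter α}
    [l.NeBot] {ε : α → ℝ} (hε : ∀ᶠ n in l, 0 ≤ ε n) (h0 : Tendsto ε l (𝓝 0)) {x y : α → E}
    {Lx Ly Lxy : ℝ} (hx : Tendsto (fun n => ‖x n‖ ^ ε n) l (𝓝 Lx))
    (hy : Tendsto (fun n => ‖y n‖ ^ ε n) l (𝓝 Ly))
    (hxy : Tendsto (fun n => ‖x n + y n‖ ^ ε n) l (𝓝 Lxy)) :
    Lxy ≤ max Lx Ly := by
  have hbound : Tendsto (fun n => (2 : ℝ) ^ ε n * max (‖x n‖ ^ ε n) (‖y n‖ ^ ε n)) l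
      (𝓝 (max Lx Ly)) := by
    simpa using (tendsto_const_rpow_of_tendsto_zero two_ne_zero h0).mul (hx.max hy)
  exact le_of_tendsto_of_tendsto hxy hbound
    (hε.mono fun n hn => norm_add_rpow_le_two_rpow_mul_max (x n) (y n) hn)

lemma Filter.Tendsto.norm_mul_rpow {α R : Type*} [SeminormedRing R] [NormMulClass R]
    {l : Filter α} {ε : α → ℝ} {x y : α → R} {Lx Ly : ℝ}
    (hx : Tendsto (fun n => ‖x n‖ ^ ε n) l (𝓝 Lx))
    (hy : Tendsto (fun n => ‖y n‖ ^ ε n) l (𝓝 Ly)) :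
    Tendsto (fun n => ‖x n * y n‖ ^ ε n) l (𝓝 (Lx * Ly)) := by
  simpa only [norm_mul, Real.mul_rpow (norm_nonneg _) (norm_nonneg _)] using hx.mul hy

/-- For an ultrafilter ω with lim_ω ε_n = 0, the seminorm |x|_ω = lim_ω |x_n|^{ε_n} on
A^ε induces a non-Archimedean absolute value on H(ω) = A^ε/ker(ω): it is multiplicative,
satisfies the ultrametric inequality |x+y|_ω ≤ max(|x|_ω, |y|_ω), and |2|_ω = 1. -/
theorem stmt_9 (ε : ℕ → ℝ) (hε : ∀ n, ε n ∈ Set.Ioc (0 : ℝ) 1) (ω : Ultrafilter ℕ)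
    (h0 : Tendsto ε ω (nhds 0)) :
    (∀ x y : ℕ → ℂ,
      (∃ M : ℝ, ∀ n, ‖x n‖ ^ ε n ≤ M) →
      (∃ M : ℝ, ∀ n, ‖y n‖ ^ ε n ≤ M) →
      ∀ Lx Ly Lxy : ℝ,
        Tendsto (fun n => ‖x n‖ ^ ε n) ω (nhds Lx) →
        Tendsto (fun n => ‖y n‖ ^ ε n) ω (nhds Ly) →
        Tendsto (fun n => ‖x n + y n‖ ^ ε n) ω (nhds Lxy) →
        Lxy ≤ max Lx Ly) ∧
    (∀ x y : ℕ → ℂ,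
      (∃ M : ℝ, ∀ n, ‖x n‖ ^ ε n ≤ M) →
      (∃ M : ℝ, ∀ n, ‖y n‖ ^ ε n ≤ M) →
      ∀ Lx Ly : ℝ,
        Tendsto (fun n => ‖x n‖ ^ ε n) ω (nhds Lx) →
        Tendsto (fun n => ‖y n‖ ^ ε n) ω (nhds Ly) →
        Tendsto (fun n => ‖x n * y n‖ ^ ε n) ω (nhds (Lx * Ly))) ∧
    Tendsto (fun n => ‖(2 : ℂ)‖ ^ ε n) ω (nhds 1) := by
  refine ⟨fun x y _ _ Lx Ly Lxy hx hy hxy => ?_, fun x y _ _ Lx Ly hx hy => hx.norm_mul_rpow hy,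
    tendsto_const_rpow_of_tendsto_zero (by norm_num) h0⟩
  exact le_max_of_tendsto_norm_add_rpow (.of_forall fun n => (hε n).1.le) h0 hx hy hxy
end

section
/- Let ε = (ε_n) be a sequence in (0,1] and ω a non-principal ultrafilter on ℕ with lim_ω ε_n = 0. Then the valued field H(ω) = A^ε/ker(ω), equipped with the norm |x|_ω = lim_ω |x_n|^{ε_n}, is spherically complete: every decreasing sequence of closed balls in H(ω) has nonempty intersection. -/
/-!
Since `0 ≤ ε n ≤ 1`, `x ↦ ‖x‖ ^ ε n` is subadditive, so all the distances involved are bounded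
sequences and have limits along `ω`. As the balls are nested, for each `m` the set `U m` of indices
`n` at which `a m n` lies within `r i + 1/(m+1)` of every earlier centre `a i n` belongs to `ω`.
Because `ω` is non-principal, the diagonal index `k n`, the largest `m ≤ n` with `n ∈ U m`, tends
to infinity along `ω`, and `b n := a (k n) n` lies in every ball.
-/

open Filter Topology Set

lemma norm_add_rpow_le {E : Type*} [SeminormedAddGroup E] {e : ℝ} (he0 : 0 ≤ e) (he1 : e ≤ 1)
    (x y : E) : ‖x + y‖ ^ e ≤ ‖x‖ ^ e + ‖y‖ ^ e :=
  (Real.rpow_le_rpow (norm_nonneg _) (norm_add_le x y) he0).trans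
    (Real.rpow_add_le_add_rpow (norm_nonneg _) (norm_nonneg _) he0 he1)

lemma norm_sub_rpow_le {E : Type*} [SeminormedAddGroup E] {e : ℝ} (he0 : 0 ≤ e) (he1 : e ≤ 1)
    (x y : E) : ‖x - y‖ ^ e ≤ ‖x‖ ^ e + ‖y‖ ^ e := by
  simpa only [sub_eq_add_neg, norm_neg] using norm_add_rpow_le he0 he1 x (-y)

lemma Ultrafilter.exists_tendsto_of_forall_mem_Icc {α : Type*} (ω : Ultrafilter α) {f : α → ℝ}
    {c d : ℝ} (hf : ∀ x, f x ∈ Icc c d) : ∃ L, Tendsto f ω (𝓝 L) := by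
  obtain ⟨L, -, hL⟩ := isCompact_Icc.ultrafilter_le_nhds (ω.map f)
    (by rw [Ultrafilter.coe_map]; exact tendsto_principal.2 (.of_forall hf))
  exact ⟨L, hL⟩

lemma Ultrafilter.le_atTop_of_forall_ne_pure {ω : Ultrafilter ℕ} (hω : ∀ n, ω ≠ pure n) :
    (ω : Filter ℕ) ≤ atTop := by
  rcases ω.le_cofinite_or_eq_pure with h | ⟨n, rfl⟩
  · rwa [← Nat.cofinite_eq_atTop]
  · exact absurd rfl (hω n)

lemma exists_tendsto_atTop_forall_mem {l : Filter ℕ} (hl : l ≤ atTop) {U : ℕ → Set ℕ}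
    (hU0 : U 0 = univ) (hU : ∀ m, U m ∈ l) :
    ∃ k : ℕ → ℕ, Tendsto k l atTop ∧ ∀ n, n ∈ U (k n) := by
  classical
  refine ⟨fun n => Nat.findGreatest (n ∈ U ·) n, tendsto_atTop.2 fun m => ?_,
    fun n => Nat.findGreatest_spec (P := (n ∈ U ·)) (Nat.zero_le n) (hU0 ▸ mem_univ n)⟩
  filter_upwards [hU m, hl (eventually_ge_atTop m)] with n hn hmn
  exact Nat.le_findGreatest hmn hn

section RpowBounded

variable {ε : ℕ → ℝ} (hε : ∀ n, ε n ∈ Icc (0 : ℝ) 1) {x y : ℕ → ℂ} {M N : ℝ}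
include hε

lemma rpow_norm_sub_mem_Icc (hx : ∀ n, ‖x n‖ ^ ε n ≤ M) (hy : ∀ n, ‖y n‖ ^ ε n ≤ N) (n : ℕ) :
    ‖x n - y n‖ ^ ε n ∈ Icc 0 (M + N) :=
  ⟨Real.rpow_nonneg (norm_nonneg _) _,
    (norm_sub_rpow_le (hε n).1 (hε n).2 _ _).trans (add_le_add (hx n) (hy n))⟩

lemma exists_tendsto_rpow_norm_sub (ω : Ultrafilter ℕ) (hx : ∀ n, ‖x n‖ ^ ε n ≤ M)
    (hy : ∀ n, ‖y n‖ ^ ε n ≤ N) : ∃ L, Tendsto (fun n => ‖x n - y n‖ ^ ε n) ω (𝓝 L) :=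
  ω.exists_tendsto_of_forall_mem_Icc (rpow_norm_sub_mem_Icc hε hx hy)

lemma eventually_rpow_norm_sub_lt (ω : Ultrafilter ℕ) (hx : ∀ n, ‖x n‖ ^ ε n ≤ M)
    (hy : ∀ n, ‖y n‖ ^ ε n ≤ N) {r δ : ℝ}
    (hr : ∀ L, Tendsto (fun n => ‖x n - y n‖ ^ ε n) ω (𝓝 L) → L ≤ r) (hδ : 0 < δ) :
    ∀ᶠ n in ω, ‖x n - y n‖ ^ ε n < r + δ := by
  obtain ⟨L, hL⟩ := exists_tendsto_rpow_norm_sub hε ω hx hy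
  exact hL.eventually_lt_const (by linarith [hr L hL])

end RpowBounded

theorem stmt_10_general (ε : ℕ → ℝ) (hε : ∀ n, ε n ∈ Set.Ioc (0 : ℝ) 1) (ω : Ultrafilter ℕ)
    (hnp : ∀ n : ℕ, ω ≠ pure n)
    (a : ℕ → ℕ → ℂ) (ha : ∀ i, ∃ M : ℝ, ∀ n, ‖a i n‖ ^ ε n ≤ M)
    (r : ℕ → ℝ) (hr : ∀ i, 0 < r i)
    (hnest : ∀ i j, i ≤ j → ∀ L : ℝ,
      Tendsto (fun n => ‖a j n - a i n‖ ^ ε n) ω (nhds L) → L ≤ r i) :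
    ∃ b : ℕ → ℂ, (∃ M : ℝ, ∀ n, ‖b n‖ ^ ε n ≤ M) ∧
      ∀ i, ∃ L : ℝ,
        Tendsto (fun n => ‖b n - a i n‖ ^ ε n) ω (nhds L) ∧ L ≤ r i := by
  choose M hM using ha
  have hε' : ∀ n, ε n ∈ Icc (0 : ℝ) 1 := fun n => Ioc_subset_Icc_self (hε n)
  set U : ℕ → Set ℕ := fun m => {n | ∀ i ≤ m, ‖a m n - a i n‖ ^ ε n < r i + 1 / (m + 1)}
  have hU0 : U 0 = univ := eq_univ_of_forall fun n i hi => by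
    obtain rfl := Nat.le_zero.1 hi
    simpa [Real.zero_rpow (hε n).1.ne'] using add_pos (hr 0) one_pos
  have hU : ∀ m, U m ∈ ω := fun m => (eventually_all_finite (finite_Iic m)).2 fun i him =>
    eventually_rpow_norm_sub_lt hε' ω (hM m) (hM i) (hnest i m him) Nat.one_div_pos_of_nat
  obtain ⟨k, hk, hkU⟩ :=
    exists_tendsto_atTop_forall_mem (Ultrafilter.le_atTop_of_forall_ne_pure hnp) hU0 hU
  have hb : ∀ n, ‖a (k n) n‖ ^ ε n ≤ r 0 + 1 + M 0 := by
    intro n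
    have hb0 : ‖a (k n) n - a 0 n‖ ^ ε n ≤ r 0 + 1 :=
      (hkU n 0 (Nat.zero_le _)).le.trans <| by
        gcongr; simpa using Nat.one_div_le_one_div (α := ℝ) (Nat.zero_le (k n))
    simpa using (norm_add_rpow_le (hε' n).1 (hε' n).2 (a (k n) n - a 0 n) (a 0 n)).trans
      (add_le_add hb0 (hM 0 n))
  refine ⟨fun n => a (k n) n, ⟨_, hb⟩, fun i => ?_⟩
  obtain ⟨L, hL⟩ := exists_tendsto_rpow_norm_sub hε' ω hb (hM i)
  have hr_add : Tendsto (fun n => r i + 1 / ((k n : ℝ) + 1)) ω (𝓝 (r i)) := by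
    simpa only [add_zero, Function.comp_def] using
      (tendsto_const_nhds (x := r i)).add (tendsto_one_div_add_atTop_nhds_zero_nat.comp hk)
  refine ⟨L, hL, le_of_tendsto_of_tendsto hL hr_add ?_⟩
  filter_upwards [hk (eventually_ge_atTop i)] with n hn using (hkU n i hn).le

/-- For a non-principal ultrafilter ω with lim_ω ε_n = 0, the valued field
H(ω) = A^ε/ker(ω) with norm |x|_ω = lim_ω |x_n|^{ε_n} is spherically complete: every
decreasing sequence of closed balls (centers a_i, radii r_i > 0) has a common point. -/
theorem stmt_10 (ε : ℕ → ℝ) (hε : ∀ n, ε n ∈ Set.Ioc (0 : ℝ) 1) (ω : Ultrafilter ℕ)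
    (hnp : ∀ n : ℕ, ω ≠ pure n) (h0 : Tendsto ε ω (nhds 0))
    (a : ℕ → ℕ → ℂ) (ha : ∀ i, ∃ M : ℝ, ∀ n, ‖a i n‖ ^ ε n ≤ M)
    (r : ℕ → ℝ) (hr : ∀ i, 0 < r i) (hrmono : Antitone r)
    (hnest : ∀ i j, i ≤ j → ∀ L : ℝ,
      Tendsto (fun n => ‖a j n - a i n‖ ^ ε n) ω (nhds L) → L ≤ r i) :
    ∃ b : ℕ → ℂ, (∃ M : ℝ, ∀ n, ‖b n‖ ^ ε n ≤ M) ∧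
      ∀ i, ∃ L : ℝ,
        Tendsto (fun n => ‖b n - a i n‖ ^ ε n) ω (nhds L) ∧ L ≤ r i :=
  stmt_10_general ε hε ω hnp a ha r hr hnest
end

section
/- Let ε = (ε_n) be a sequence in (0,1] and ω a non-principal ultrafilter on ℕ with lim_ω ε_n = 0. Then the valued field H(ω) = A^ε/ker(ω) with norm |x|_ω = lim_ω |x_n|^{ε_n} is algebraically closed. Moreover its value group |H(ω)*| is all of ℝ_{>0}. -/
/-!
Lift the coefficients of a monic polynomial over `H(ω)` to bounded sequences and take an exact
complex root `α n` of the `n`-th coordinate polynomial. Cauchy's bound `‖z‖ < 1 + ∑ ‖cᵢ‖`,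
combined with the subadditivity of `t ↦ t ^ p` for `0 < p ≤ 1`, gives
`‖α n‖ ^ ε n ≤ 1 + ∑ ‖cᵢ n‖ ^ ε n`, so `α` lies in `A^ε`. For the value group, `x n = ρ ^ (1 / ε n)`
has `‖x n‖ ^ ε n = ρ` for every `n`.
-/

open Filter

theorem Real.rpow_sum_le_sum_rpow {ι : Type*} {s : Finset ι} {f : ι → ℝ} (hf : ∀ i ∈ s, 0 ≤ f i)
    {p : ℝ} (hp : 0 < p) (hp1 : p ≤ 1) :
    (∑ i ∈ s, f i) ^ p ≤ ∑ i ∈ s, f i ^ p := by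
  classical
  induction s using Finset.induction_on with
  | empty => simp [Real.zero_rpow hp.ne']
  | insert a s ha ih =>
    rw [Finset.sum_insert ha, Finset.sum_insert ha]
    have hf' : ∀ i ∈ s, 0 ≤ f i := fun i hi => hf i (Finset.mem_insert_of_mem hi)
    calc (f a + ∑ i ∈ s, f i) ^ p ≤ f a ^ p + (∑ i ∈ s, f i) ^ p :=
          Real.rpow_add_le_add_rpow (hf a (Finset.mem_insert_self a s))
            (Finset.sum_nonneg hf') hp.le hp1
      _ ≤ f a ^ p + ∑ i ∈ s, f i ^ p := by gcongr; exact ih hf'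

namespace Polynomial

section Semiring

variable {R : Type*} [Semiring R] {d : ℕ}

noncomputable def monicOfCoeffs (c : Fin d → R) : R[X] :=
  X ^ d + ∑ i : Fin d, C (c i) * X ^ (i : ℕ)

theorem eval_monicOfCoeffs (c : Fin d → R) (z : R) :
    (monicOfCoeffs c).eval z = z ^ d + ∑ i : Fin d, c i * z ^ (i : ℕ) := by
  simp [monicOfCoeffs, eval_finsetSum, eval_X_pow]

theorem monic_monicOfCoeffs (c : Fin d → R) : (monicOfCoeffs c).Monic :=
  monic_X_pow_add (degree_sum_fin_lt c)

theorem natDegree_monicOfCoeffs [Nontrivial R] (c : Fin d → R) :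
    (monicOfCoeffs c).natDegree = d := by
  rw [monicOfCoeffs, natDegree_add_eq_left_of_degree_lt] <;> simp [degree_sum_fin_lt]

theorem coeff_monicOfCoeffs_of_lt (c : Fin d → R) {j : ℕ} (hj : j < d) :
    (monicOfCoeffs c).coeff j = c ⟨j, hj⟩ := by
  simp only [monicOfCoeffs, coeff_add, coeff_X_pow, hj.ne, if_false, zero_add, finsetSum_coeff,
    coeff_C_mul_X_pow]
  rw [Finset.sum_eq_single ⟨j, hj⟩]
  · simp
  · exact fun i _ hi => if_neg fun h => hi (Fin.ext h.symm)
  · simp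

end Semiring

theorem IsRoot.norm_lt_one_add_sum_norm_coeffs {K : Type*} [NormedDivisionRing K] {d : ℕ}
    {c : Fin d → K} {z : K} (hz : (monicOfCoeffs c).IsRoot z) :
    ‖z‖ < 1 + ∑ i, ‖c i‖ := by
  have hcauchy := hz.norm_lt_cauchyBound (monic_monicOfCoeffs c).ne_zero
  have hsup : (Finset.range d).sup (‖(monicOfCoeffs c).coeff ·‖₊) ≤ ∑ i, ‖c i‖₊ :=
    Finset.sup_le fun j hj => by
      rw [coeff_monicOfCoeffs_of_lt c (Finset.mem_range.1 hj)]
      exact Finset.single_le_sum (f := (‖c ·‖₊)) (fun _ _ => by positivity) (Finset.mem_univ _)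
  rw [cauchyBound, natDegree_monicOfCoeffs, (monic_monicOfCoeffs c).leadingCoeff, nnnorm_one,
    div_one] at hcauchy
  have : ‖z‖₊ < 1 + ∑ i, ‖c i‖₊ := add_comm (∑ i, ‖c i‖₊) 1 ▸ hcauchy.trans_le (by gcongr)
  rw [← NNReal.coe_lt_coe] at this
  simpa using this

theorem exists_isRoot_monicOfCoeffs {K : Type*} [Field K] [IsAlgClosed K] {d : ℕ} (hd : d ≠ 0)
    (c : Fin d → K) : ∃ z, (monicOfCoeffs c).IsRoot z :=
  IsAlgClosed.exists_root _ <| by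
    rw [degree_eq_natDegree (monic_monicOfCoeffs c).ne_zero, natDegree_monicOfCoeffs]
    exact_mod_cast hd

theorem IsRoot.rpow_norm_le_one_add_sum_rpow_norm {K : Type*} [NormedDivisionRing K] {d : ℕ}
    {c : Fin d → K} {z : K} (hz : (monicOfCoeffs c).IsRoot z) {p : ℝ} (hp : 0 < p) (hp1 : p ≤ 1) :
    ‖z‖ ^ p ≤ 1 + ∑ i, ‖c i‖ ^ p :=
  calc ‖z‖ ^ p ≤ (1 + ∑ i, ‖c i‖) ^ p :=
        Real.rpow_le_rpow (norm_nonneg z) hz.norm_lt_one_add_sum_norm_coeffs.le hp.le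
    _ ≤ 1 ^ p + (∑ i, ‖c i‖) ^ p :=
        Real.rpow_add_le_add_rpow zero_le_one (by positivity) hp.le hp1
    _ ≤ 1 + ∑ i, ‖c i‖ ^ p := by
        rw [Real.one_rpow]
        gcongr
        exact Real.rpow_sum_le_sum_rpow (fun i _ => norm_nonneg (c i)) hp hp1

end Polynomial

open Polynomial in
theorem exists_seq_isRoot_rpow_norm_bounded {K : Type*} [NormedField K] [IsAlgClosed K]
    {ε : ℕ → ℝ} (hε : ∀ n, ε n ∈ Set.Ioc (0 : ℝ) 1) {d : ℕ} (hd : d ≠ 0) {c : Fin d → ℕ → K}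
    (hc : ∀ i, ∃ M : ℝ, ∀ n, ‖c i n‖ ^ ε n ≤ M) :
    ∃ α : ℕ → K, (∃ M : ℝ, ∀ n, ‖α n‖ ^ ε n ≤ M) ∧
      ∀ n, (monicOfCoeffs (c · n)).IsRoot (α n) := by
  choose M hM using hc
  choose α hα using fun n => exists_isRoot_monicOfCoeffs hd (c · n)
  refine ⟨α, ⟨1 + ∑ i, M i, fun n => ?_⟩, hα⟩
  calc ‖α n‖ ^ ε n ≤ 1 + ∑ i, ‖c i n‖ ^ ε n :=
        (hα n).rpow_norm_le_one_add_sum_rpow_norm (hε n).1 (hε n).2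
    _ ≤ 1 + ∑ i, M i := by gcongr with i; exact hM i n

theorem stmt_11_general (ε : ℕ → ℝ) (hε : ∀ n, ε n ∈ Set.Ioc (0 : ℝ) 1) (ω : Ultrafilter ℕ) :
    (∀ d : ℕ, 1 ≤ d → ∀ c : Fin d → ℕ → ℂ,
      (∀ i, ∃ M : ℝ, ∀ n, ‖c i n‖ ^ ε n ≤ M) →
      ∃ α : ℕ → ℂ, (∃ M : ℝ, ∀ n, ‖α n‖ ^ ε n ≤ M) ∧
        Tendsto
          (fun n => ‖(α n) ^ d + ∑ i : Fin d, c i n * (α n) ^ (i : ℕ)‖ ^ ε n)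
          ω (nhds 0)) ∧
    (∀ ρ : ℝ, 0 < ρ → ∃ x : ℕ → ℂ, (∃ M : ℝ, ∀ n, ‖x n‖ ^ ε n ≤ M) ∧
      Tendsto (fun n => ‖x n‖ ^ ε n) ω (nhds ρ)) := by
  refine ⟨fun d hd c hc => ?_, fun ρ hρ => ?_⟩
  · obtain ⟨α, hα_bdd, hα_root⟩ := exists_seq_isRoot_rpow_norm_bounded hε (by omega) hc
    refine ⟨α, hα_bdd, tendsto_const_nhds.congr fun n => ?_⟩
    rw [← Polynomial.eval_monicOfCoeffs, (hα_root n).eq_zero, norm_zero,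
      Real.zero_rpow (hε n).1.ne']
  · have hx : ∀ n, ‖((ρ ^ (ε n)⁻¹ : ℝ) : ℂ)‖ ^ ε n = ρ := fun n => by
      rw [Complex.norm_real, Real.norm_of_nonneg (by positivity),
        Real.rpow_inv_rpow hρ.le (hε n).1.ne']
    exact ⟨_, ⟨ρ, fun n => (hx n).le⟩, tendsto_const_nhds.congr fun n => (hx n).symm⟩

/-- For a non-principal ultrafilter ω with lim_ω ε_n = 0, the field H(ω) = A^ε/ker(ω)
with norm |x|_ω = lim_ω |x_n|^{ε_n} is algebraically closed (every monic polynomial of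
degree d ≥ 1 with coefficients in A^ε has a root in A^ε modulo ker(ω)), and its value
group is all of ℝ_{>0}. -/
theorem stmt_11 (ε : ℕ → ℝ) (hε : ∀ n, ε n ∈ Set.Ioc (0 : ℝ) 1) (ω : Ultrafilter ℕ)
    (hnp : ∀ n : ℕ, ω ≠ pure n) (h0 : Tendsto ε ω (nhds 0)) :
    (∀ d : ℕ, 1 ≤ d → ∀ c : Fin d → ℕ → ℂ,
      (∀ i, ∃ M : ℝ, ∀ n, ‖c i n‖ ^ ε n ≤ M) →
      ∃ α : ℕ → ℂ, (∃ M : ℝ, ∀ n, ‖α n‖ ^ ε n ≤ M) ∧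
        Tendsto
          (fun n => ‖(α n) ^ d + ∑ i : Fin d, c i n * (α n) ^ (i : ℕ)‖ ^ ε n)
          ω (nhds 0)) ∧
    (∀ ρ : ℝ, 0 < ρ → ∃ x : ℕ → ℂ, (∃ M : ℝ, ∀ n, ‖x n‖ ^ ε n ≤ M) ∧
      Tendsto (fun n => ‖x n‖ ^ ε n) ω (nhds ρ)) :=
  stmt_11_general ε hε ω
end

section
/- Let ε = (ε_n) be a sequence in (0,1] and ω an ultrafilter on ℕ with e := lim_ω ε_n > 0. Then the map sending (x_n) ∈ A^ε to lim_ω x_n ∈ ℂ is a well-defined ring homomorphism inducing an isometric field isomorphism from H(ω) = A^ε/ker(ω) onto (ℂ, |·|^e). -/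
/-!
Along ω the exponents ε_n eventually exceed e/2, so a bound on |x_n|^{ε_n} bounds |x_n|
itself there, and compactness of closed balls in ℂ yields the ω-limit. The isometry is
continuity of (t, p) ↦ t^p at p = e > 0, and constant sequences give surjectivity.
-/

open Filter Topology

lemma Real.le_max_one_rpow_inv_of_rpow_le {t p a M : ℝ} (ht : 0 ≤ t) (ha : 0 < a)
    (hap : a ≤ p) (hM : t ^ p ≤ M) : t ≤ max 1 (M ^ a⁻¹) := by
  rcases le_or_gt t 1 with h1 | h1
  · exact le_max_of_le_left h1
  refine le_max_of_le_right ?_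
  calc t = t ^ (1 : ℝ) := (Real.rpow_one t).symm
    _ ≤ t ^ (p * a⁻¹) := by
        gcongr
        · exact h1.le
        · rwa [le_mul_inv_iff₀ ha, one_mul]
    _ = (t ^ p) ^ a⁻¹ := Real.rpow_mul ht _ _
    _ ≤ M ^ a⁻¹ := by gcongr

lemma Real.rpow_le_max_one_self {t p : ℝ} (ht : 0 ≤ t) (hp : p ∈ Set.Icc (0 : ℝ) 1) :
    t ^ p ≤ max 1 t := by
  rcases le_or_gt t 1 with h1 | h1
  · exact le_max_of_le_left (Real.rpow_le_one ht h1 hp.1)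
  · exact le_max_of_le_right
      ((Real.rpow_le_rpow_of_exponent_le h1.le hp.2).trans_eq (Real.rpow_one t))

lemma Ultrafilter.exists_tendsto_of_norm_rpow_le {ι E : Type*} [NormedAddCommGroup E]
    [ProperSpace E] (ω : Ultrafilter ι) {ε : ι → ℝ} {e : ℝ} (he : 0 < e)
    (hεe : Tendsto ε ω (𝓝 e)) {x : ι → E} {M : ℝ} (hM : ∀ n, ‖x n‖ ^ ε n ≤ M) :
    ∃ L, Tendsto x ω (𝓝 L) := by
  have hbound :
      ∀ᶠ n in (ω : Filter ι), x n ∈ Metric.closedBall 0 (max 1 (M ^ (e / 2)⁻¹)) := by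
    filter_upwards [hεe (le_mem_nhds (half_lt_self he))] with n hn
    rw [mem_closedBall_zero_iff]
    exact Real.le_max_one_rpow_inv_of_rpow_le (norm_nonneg _) (half_pos he) hn (hM n)
  obtain ⟨L, -, hL⟩ := (isCompact_closedBall _ _).ultrafilter_le_nhds' (ω.map x) hbound
  exact ⟨L, hL⟩

/-- For an ultrafilter ω with e = lim_ω ε_n > 0, the map (x_n) ↦ lim_ω x_n is a
well-defined ring homomorphism on A^ε inducing an isometric field isomorphism of
H(ω) = A^ε/ker(ω) onto (ℂ, |·|^e): the ω-limit exists for every element of A^ε, it is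
additive and multiplicative, it is isometric (lim_ω |x_n|^{ε_n} = |lim_ω x_n|^e), and it
is surjective onto ℂ. -/
theorem stmt_12 (ε : ℕ → ℝ) (hε : ∀ n, ε n ∈ Set.Ioc (0 : ℝ) 1) (ω : Ultrafilter ℕ)
    (e : ℝ) (he : 0 < e) (hεe : Tendsto ε ω (nhds e)) :
    (∀ x : ℕ → ℂ, (∃ M : ℝ, ∀ n, ‖x n‖ ^ ε n ≤ M) →
      ∃ L : ℂ, Tendsto x ω (nhds L)) ∧
    (∀ x y : ℕ → ℂ, ∀ Lx Ly : ℂ, Tendsto x ω (nhds Lx) → Tendsto y ω (nhds Ly) →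
      Tendsto (fun n => x n + y n) ω (nhds (Lx + Ly)) ∧
      Tendsto (fun n => x n * y n) ω (nhds (Lx * Ly))) ∧
    (∀ x : ℕ → ℂ, ∀ L : ℂ, Tendsto x ω (nhds L) →
      Tendsto (fun n => ‖x n‖ ^ ε n) ω (nhds (‖L‖ ^ e))) ∧
    (∀ c : ℂ, ∃ x : ℕ → ℂ, (∃ M : ℝ, ∀ n, ‖x n‖ ^ ε n ≤ M) ∧
      Tendsto x ω (nhds c)) := by
  refine ⟨?_, ?_, ?_, ?_⟩
  · rintro x ⟨M, hM⟩
    exact ω.exists_tendsto_of_norm_rpow_le he hεe hM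
  · exact fun x y Lx Ly hx hy => ⟨hx.add hy, hx.mul hy⟩
  · exact fun x L hx => hx.norm.rpow hεe (Or.inr he)
  · exact fun c => ⟨fun _ => c, ⟨max 1 ‖c‖, fun n =>
      Real.rpow_le_max_one_self (norm_nonneg c) (Set.Ioc_subset_Icc_self (hε n))⟩,
      tendsto_const_nhds⟩
end

section
/- Let ω be a non-principal ultrafilter on ℕ, ε = (ε_n) a sequence in (0,1], and M_n(z) = a_n z + b_n a sequence of complex affine Möbius transformations, with x_n = M_n(0,1) ∈ ℍ³ and x_⋆ = (0,1). Then lim_ω ε_n · d_ℍ(x_n, x_⋆) < ∞ if and only if lim_ω |b_n|^{ε_n} < ∞, lim_ω |a_n|^{ε_n} < ∞, and lim_ω |a_n|^{-ε_n} < ∞. -/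
/-!
With `A = |a|` and `B = |b|`, `cosh d_ℍ((b, A), (0, 1)) = Y / 2` where `Y = B² / A + A + A⁻¹ ≥ 2`,
and `arcosh (Y / 2)` lies within `log 2` of `log Y`; so `ε d_ℍ` is ω-bounded iff `Y ^ ε = exp (ε log Y)`
is. As `t ↦ t ^ ε` is subadditive for `ε ≤ 1`, `Y ^ ε` is bounded iff `(B² / A) ^ ε`, `A ^ ε` and
`A ^ (-ε)` are, and given the last two, `(B² / A) ^ ε` is bounded iff `B ^ ε` is, because
`(B ^ ε)² = (B² / A) ^ ε · A ^ ε`.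
-/

/-- Inverse hyperbolic cosine. -/
noncomputable def arcosh (x : ℝ) : ℝ := Real.log (x + Real.sqrt (x ^ 2 - 1))

/-- The hyperbolic distance on the upper half-space model ℍ³ = ℂ × ℝ_{>0}. -/
noncomputable def distH3 (p q : ℂ × ℝ) : ℝ :=
  arcosh (1 + (‖p.1 - q.1‖ ^ 2 + (p.2 - q.2) ^ 2) / (2 * p.2 * q.2))

open Filter Set
open Real hiding arcosh

lemma log_le_arcosh {x : ℝ} (hx : 1 ≤ x) : log x ≤ arcosh x :=
  log_le_log (by linarith) (le_add_of_nonneg_right (sqrt_nonneg _))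

lemma arcosh_le_log_two_mul {x : ℝ} (hx : 1 ≤ x) : arcosh x ≤ log (2 * x) := by
  have hsqrt : sqrt (x ^ 2 - 1) ≤ x := by
    rw [sqrt_le_left (by linarith)]
    linarith
  have : 0 ≤ sqrt (x ^ 2 - 1) := sqrt_nonneg _
  exact log_le_log (by positivity) (by linarith)

lemma distH3_basepoint (b : ℂ) {A : ℝ} (hA : 0 < A) :
    distH3 (b, A) (0, 1) = arcosh ((‖b‖ ^ 2 / A + A + A⁻¹) / 2) := by
  simp only [distH3, sub_zero]
  congr 1
  field_simp
  ring

section IsBoundedUnder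

variable {ι : Type*} {l : Filter ι} {ε : ι → ℝ}

lemma isBoundedUnder_mul_arcosh_half_iff (hε : ∀ i, ε i ∈ Icc 0 1) {Y : ι → ℝ}
    (hY : ∀ i, 2 ≤ Y i) :
    IsBoundedUnder (· ≤ ·) l (fun i ↦ ε i * arcosh (Y i / 2)) ↔
      IsBoundedUnder (· ≤ ·) l (fun i ↦ Y i ^ ε i) := by
  have hY₀ i : 0 < Y i := by linarith [hY i]
  simp_rw [rpow_def_of_pos (hY₀ _), isBoundedUnder_le_exp_comp, mul_comm (log _)]
  have hlower i : ε i * arcosh (Y i / 2) ≤ ε i * log (Y i) := by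
    gcongr
    · exact (hε i).1
    · simpa [mul_div_cancel₀] using arcosh_le_log_two_mul (x := Y i / 2) (by linarith [hY i])
  have hupper i : ε i * log (Y i) ≤ ε i * arcosh (Y i / 2) + log 2 := by
    have h := log_le_arcosh (x := Y i / 2) (by linarith [hY i])
    rw [log_div (hY₀ i).ne' two_ne_zero] at h
    nlinarith [(hε i).1, (hε i).2, log_nonneg (one_le_two (α := ℝ))]
  exact ⟨fun h ↦ (isBoundedUnder_le_add h isBoundedUnder_const).mono_le
    (Eventually.of_forall hupper), fun h ↦ h.mono_le (Eventually.of_forall hlower)⟩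

lemma isBoundedUnder_rpow_add_iff (hε : ∀ i, ε i ∈ Icc 0 1) {f g : ι → ℝ}
    (hf : ∀ i, 0 ≤ f i) (hg : ∀ i, 0 ≤ g i) :
    IsBoundedUnder (· ≤ ·) l (fun i ↦ (f i + g i) ^ ε i) ↔
      IsBoundedUnder (· ≤ ·) l (fun i ↦ f i ^ ε i) ∧
        IsBoundedUnder (· ≤ ·) l (fun i ↦ g i ^ ε i) := by
  refine ⟨fun h ↦ ⟨h.mono_le (Eventually.of_forall fun i ↦ ?_),
    h.mono_le (Eventually.of_forall fun i ↦ ?_)⟩, fun ⟨hf', hg'⟩ ↦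
    (isBoundedUnder_le_add hf' hg').mono_le (Eventually.of_forall fun i ↦
      rpow_add_le_add_rpow (hf i) (hg i) (hε i).1 (hε i).2)⟩
  · exact rpow_le_rpow (hf i) (le_add_of_nonneg_right (hg i)) (hε i).1
  · exact rpow_le_rpow (hg i) (le_add_of_nonneg_left (hf i)) (hε i).1

lemma isBoundedUnder_rpow_sq_div_iff [l.NeBot] {A B : ι → ℝ} (hA : ∀ i, 0 < A i)
    (hB : ∀ i, 0 ≤ B i) (hAε : IsBoundedUnder (· ≤ ·) l (fun i ↦ A i ^ ε i))
    (hAε' : IsBoundedUnder (· ≤ ·) l (fun i ↦ A i ^ (-ε i))) :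
    IsBoundedUnder (· ≤ ·) l (fun i ↦ (B i ^ 2 / A i) ^ ε i) ↔
      IsBoundedUnder (· ≤ ·) l (fun i ↦ B i ^ ε i) := by
  have hsplit i : (B i ^ 2 / A i) ^ ε i = B i ^ ε i * B i ^ ε i * A i ^ (-ε i) := by
    rw [div_rpow (sq_nonneg _) (hA i).le, ← rpow_pow_comm (hB i), rpow_neg (hA i).le, sq,
      div_eq_mul_inv]
  have hBε i : 0 ≤ B i ^ ε i := rpow_nonneg (hB i) _
  constructor
  · intro h
    refine (isBoundedUnder_le_add h hAε).mono_le (Eventually.of_forall fun i ↦ ?_)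
    have hAε₀ : 0 < A i ^ ε i := rpow_pos_of_pos (hA i) _
    have hprod : B i ^ ε i * B i ^ ε i = (B i ^ 2 / A i) ^ ε i * A i ^ ε i := by
      rw [hsplit, rpow_neg (hA i).le, mul_assoc _ (_⁻¹), inv_mul_cancel₀ hAε₀.ne', mul_one]
    have hu : 0 ≤ (B i ^ 2 / A i) ^ ε i := rpow_nonneg (div_nonneg (sq_nonneg _) (hA i).le) _
    show B i ^ ε i ≤ (B i ^ 2 / A i) ^ ε i + A i ^ ε i
    nlinarith
  · intro h
    simp_rw [hsplit]
    have hB₀ : ∃ᶠ i in l, 0 ≤ B i ^ ε i := (Eventually.of_forall hBε).frequently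
    refine isBoundedUnder_le_mul_of_nonneg (u := fun i ↦ B i ^ ε i * B i ^ ε i)
      (hB₀.mono fun i hi ↦ mul_nonneg hi hi) (isBoundedUnder_le_mul_of_nonneg hB₀ h
      (Eventually.of_forall hBε) h) (Eventually.of_forall fun i ↦ rpow_nonneg (hA i).le _) hAε'

end IsBoundedUnder

theorem stmt_15_general (ω : Ultrafilter ℕ)
    (ε : ℕ → ℝ) (hε : ∀ n, ε n ∈ Set.Ioc (0 : ℝ) 1)
    (a b : ℕ → ℂ) (ha : ∀ n, a n ≠ 0) :
    (∃ M : ℝ, {n : ℕ | ε n * distH3 (a n * 0 + b n, ‖a n‖ * 1) (0, 1) ≤ M} ∈ ω)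
      ↔
    ((∃ M : ℝ, {n : ℕ | ‖b n‖ ^ ε n ≤ M} ∈ ω) ∧
     (∃ M : ℝ, {n : ℕ | ‖a n‖ ^ ε n ≤ M} ∈ ω) ∧
     (∃ M : ℝ, {n : ℕ | ‖a n‖ ^ (-(ε n)) ≤ M} ∈ ω)) := by
  have hA n : 0 < ‖a n‖ := norm_pos_iff.mpr (ha n)
  have hε' n : ε n ∈ Icc 0 1 := Ioc_subset_Icc_self (hε n)
  have hB n : 0 ≤ ‖b n‖ ^ 2 / ‖a n‖ := div_nonneg (sq_nonneg _) (hA n).le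
  have hY n : 2 ≤ ‖b n‖ ^ 2 / ‖a n‖ + ‖a n‖ + ‖a n‖⁻¹ := by
    have hinv : ‖a n‖ * ‖a n‖⁻¹ = 1 := mul_inv_cancel₀ (hA n).ne'
    nlinarith [sq_nonneg (‖a n‖ - 1), inv_pos.mpr (hA n), hB n]
  change IsBoundedUnder (· ≤ ·) (ω : Filter ℕ) _ ↔ IsBoundedUnder (· ≤ ·) (ω : Filter ℕ) _ ∧
    IsBoundedUnder (· ≤ ·) (ω : Filter ℕ) _ ∧ IsBoundedUnder (· ≤ ·) (ω : Filter ℕ) _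
  simp_rw [mul_zero, zero_add, mul_one, distH3_basepoint _ (hA _)]
  rw [isBoundedUnder_mul_arcosh_half_iff hε' hY,
    isBoundedUnder_rpow_add_iff hε' (fun n ↦ add_nonneg (hB n) (hA n).le)
      (fun n ↦ inv_nonneg.mpr (hA n).le),
    isBoundedUnder_rpow_add_iff hε' hB (fun n ↦ (hA n).le), and_assoc]
  simp_rw [inv_rpow (norm_nonneg _), ← rpow_neg (norm_nonneg _)]
  exact and_congr_left fun ⟨hAε, hAε'⟩ ↦
    isBoundedUnder_rpow_sq_div_iff hA (fun n ↦ norm_nonneg _) hAε hAε'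

/-- Let ω be a non-principal ultrafilter, ε_n ∈ (0,1], M_n(z) = a_n z + b_n affine Möbius
maps, x_n = M_n(0,1) = (b_n, |a_n|) ∈ ℍ³ and x_⋆ = (0,1). Then
lim_ω ε_n d_ℍ(x_n, x_⋆) < ∞ (i.e. ε_n d_ℍ(x_n,x_⋆) is ω-bounded) iff
lim_ω |b_n|^{ε_n} < ∞, lim_ω |a_n|^{ε_n} < ∞ and lim_ω |a_n|^{-ε_n} < ∞. -/
theorem stmt_15 (ω : Ultrafilter ℕ) (hnp : ∀ n : ℕ, ω ≠ pure n)
    (ε : ℕ → ℝ) (hε : ∀ n, ε n ∈ Set.Ioc (0 : ℝ) 1)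
    (a b : ℕ → ℂ) (ha : ∀ n, a n ≠ 0) :
    (∃ M : ℝ, {n : ℕ | ε n * distH3 (a n * 0 + b n, ‖a n‖ * 1) (0, 1) ≤ M} ∈ ω)
      ↔
    ((∃ M : ℝ, {n : ℕ | ‖b n‖ ^ ε n ≤ M} ∈ ω) ∧
     (∃ M : ℝ, {n : ℕ | ‖a n‖ ^ ε n ≤ M} ∈ ω) ∧
     (∃ M : ℝ, {n : ℕ | ‖a n‖ ^ (-(ε n)) ≤ M} ∈ ω)) :=
  stmt_15_general ω ε hε a b ha
end

section
/- Let ε = (ε_n) be a sequence in (0,1], ω a non-principal ultrafilter on ℕ, and P(z) = z^m Q(z) + H(z) a degree-d polynomial with coefficients in A^ε, where Q ∈ A^ε[z] has Q_ω(0) ≠ 0 in H(ω) and all coefficients of H tend to 0 in the seminorm |·|_ω. Then for n in an ω-big set, the coordinate polynomial P_n ∈ ℂ[z] has exactly m zeros (counted with multiplicity) in the disk {|z| ≤ r^{1/ε_n}}, whenever r ∈ (0,1) is sufficiently small. Consequently, if the polynomial P_ω over H(ω) has a zero of multiplicity m at 0, then there exist m sequences of complex zeros α_{i,n} of P_n with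 lim_ω |α_{i,n}|^{ε_n} = 0. -/
/-!
Rouché's theorem is replaced by a Newton-polygon argument. Suppose no root of `p` has modulus
in `(R₁, R₂]`, where `R₂ ≥ 4 ^ (deg p + 1) * R₁`, and split
`p = c * ∏_{|β| ≤ R₁} (X - β) * ∏_{|β| > R₂} (X - β)`. With `s` the number of small roots and
`W = |c| * ∏_{|β| > R₂} |β|`, the coefficient `a_s` has modulus at least `W / 2`, while
`|a_k| * R ^ k ≤ 2 ^ deg p * W * R ^ s` for every `R ∈ [R₁, R₂]`. So if `a_m` dominates the other
coefficients on these scales, then `s = m`. Among the radii `u * q ^ j`, `j ≤ d + 1`, two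
consecutive ones bound a root-free annulus, by pigeonhole; doing this once below and once above a
radius `R` shows that there are exactly `m` roots in the closed disc of radius `R`.

For `P_n = X ^ m * Q_n + H_n` this domination holds after raising everything to the power
`1 / ε_n`: `|a_m| ≥ (ρ / 2) ^ (1 / ε_n)`, `|a_k| ≤ δ ^ (1 / ε_n)` for `k < m` and
`|a_k| ≤ (2 K) ^ (1 / ε_n)`, on radii `r ^ (1 / ε_n)`. Each condition needed then follows from an
inequality between the unpowered quantities, which is uniform in `n`. The `m` roots in the disc
of radius `r₀ ^ (1 / ε_n)` are also the `m` roots in the disc of radius `r ^ (1 / ε_n)` for every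
smaller `r`, so enumerating them gives the sequences `α_i`.
-/

open Filter Polynomial

theorem norm_coeff_prod_X_sub_C_mul_pow_le (s : Multiset ℂ) {R : ℝ} (hR : 0 ≤ R) (i : ℕ) :
    ‖(s.map fun β => X - C β).prod.coeff i‖ * R ^ i ≤
      2 ^ Multiset.card s * (s.map fun β => max ‖β‖ R).prod := by
  induction s using Multiset.induction_on generalizing i with
  | empty => rcases i with _ | i <;> simp [coeff_one]
  | cons β s ih =>
    set P := (s.map fun β => X - C β).prod
    set M := 2 ^ Multiset.card s * (s.map fun β => max ‖β‖ R).prod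
    have hM : 0 ≤ M := (by positivity : (0 : ℝ) ≤ ‖P.coeff 0‖ * R ^ 0).trans (ih 0)
    suffices h : ‖((X - C β) * P).coeff i‖ * R ^ i ≤ (‖β‖ + R) * M by
      simp only [Multiset.map_cons, Multiset.prod_cons, Multiset.card_cons]
      calc _ ≤ (‖β‖ + R) * M := h
        _ ≤ 2 * max ‖β‖ R * M := by gcongr; linarith [le_max_left ‖β‖ R, le_max_right ‖β‖ R]
        _ = _ := by simp only [M]; ring
    rcases i with _ | j
    · have h0 := ih 0
      simp only [pow_zero, mul_one, mul_coeff_zero, coeff_sub, coeff_X_zero, coeff_C_zero,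
        zero_sub, neg_mul, norm_neg, norm_mul] at h0 ⊢
      nlinarith [norm_nonneg β]
    · rw [coeff_X_sub_C_mul]
      calc ‖P.coeff j - β * P.coeff (j + 1)‖ * R ^ (j + 1)
          ≤ (‖P.coeff j‖ + ‖β‖ * ‖P.coeff (j + 1)‖) * R ^ (j + 1) := by
            gcongr; exact (norm_sub_le _ _).trans_eq (by rw [norm_mul])
        _ = ‖P.coeff j‖ * R ^ j * R + ‖β‖ * (‖P.coeff (j + 1)‖ * R ^ (j + 1)) := by ring
        _ ≤ M * R + ‖β‖ * M := by gcongr <;> exact ih _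
        _ = (‖β‖ + R) * M := by ring

theorem norm_coeff_zero_prod_X_sub_C (s : Multiset ℂ) :
    ‖(s.map fun β => X - C β).prod.coeff 0‖ = (s.map fun β => ‖β‖).prod := by
  rw [coeff_zero_eq_eval_zero, eval_multiset_prod, Multiset.map_map]
  simpa [Function.comp_def] using map_multiset_prod (normHom : ℂ →*₀ ℝ) (s.map fun β => -β)

theorem norm_coeff_natDegree_mul_sub_coeff_zero_mul_le {f g : ℂ[X]} (hf : f.Monic)
    {R₁ R₂ A B : ℝ} (hR₁ : 0 < R₁) (hR : R₁ ≤ R₂)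
    (hfA : ∀ i, ‖f.coeff i‖ * R₁ ^ i ≤ A * R₁ ^ f.natDegree)
    (hgB : ∀ l, ‖g.coeff l‖ * R₂ ^ l ≤ B) :
    ‖(f * g).coeff f.natDegree - g.coeff 0‖ * R₂ ≤ f.natDegree * (A * B * R₁) := by
  set s := f.natDegree
  have hR₂ : 0 < R₂ := hR₁.trans_le hR
  have hA : 0 ≤ A * R₁ ^ s := (by positivity : (0 : ℝ) ≤ ‖f.coeff 0‖ * R₁ ^ 0).trans (hfA 0)
  have hB : 0 ≤ B := (by positivity : (0 : ℝ) ≤ ‖g.coeff 0‖ * R₂ ^ 0).trans (hgB 0)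
  have hABR : 0 ≤ A * B * R₁ := by
    have := nonneg_of_mul_nonneg_left hA (pow_pos hR₁ s); positivity
  have hterm : ∀ i ∈ Finset.range s, ‖f.coeff i * g.coeff (s - i)‖ * R₂ ≤ A * B * R₁ := by
    intro i hi
    obtain ⟨j, hj⟩ : ∃ j, s - i = j + 1 := ⟨s - i - 1, by grind⟩
    have hsplit : R₁ ^ s = R₁ ^ i * R₁ ^ (j + 1) := by rw [← pow_add]; congr 1; grind
    have hcancel : ‖f.coeff i‖ * ‖g.coeff (j + 1)‖ * R₂ ^ (j + 1) ≤ A * B * R₁ ^ (j + 1) := by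
      refine le_of_mul_le_mul_right ?_ (pow_pos hR₁ i)
      calc ‖f.coeff i‖ * ‖g.coeff (j + 1)‖ * R₂ ^ (j + 1) * R₁ ^ i
          = (‖f.coeff i‖ * R₁ ^ i) * (‖g.coeff (j + 1)‖ * R₂ ^ (j + 1)) := by ring
        _ ≤ (A * R₁ ^ s) * B := mul_le_mul (hfA i) (hj ▸ hgB _) (by positivity) hA
        _ = A * B * R₁ ^ (j + 1) * R₁ ^ i := by rw [hsplit]; ring
    rw [hj, norm_mul]
    refine le_of_mul_le_mul_right ?_ (pow_pos hR₂ j)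
    calc ‖f.coeff i‖ * ‖g.coeff (j + 1)‖ * R₂ * R₂ ^ j
        = ‖f.coeff i‖ * ‖g.coeff (j + 1)‖ * R₂ ^ (j + 1) := by ring
      _ ≤ A * B * R₁ * R₁ ^ j := by rw [mul_assoc _ R₁, ← pow_succ']; exact hcancel
      _ ≤ A * B * R₁ * R₂ ^ j := by gcongr
  rw [coeff_mul, Finset.Nat.sum_antidiagonal_eq_sum_range_succ (fun i j => f.coeff i * g.coeff j),
    Finset.sum_range_succ, Nat.sub_self, hf.coeff_natDegree, one_mul, add_sub_cancel_right]
  calc ‖∑ i ∈ Finset.range s, f.coeff i * g.coeff (s - i)‖ * R₂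
      ≤ ∑ i ∈ Finset.range s, ‖f.coeff i * g.coeff (s - i)‖ * R₂ := by
        rw [← Finset.sum_mul]; gcongr; exact norm_sum_le _ _
    _ ≤ ∑ _i ∈ Finset.range s, A * B * R₁ := Finset.sum_le_sum hterm
    _ = s * (A * B * R₁) := by simp

noncomputable def smallRoots (p : ℂ[X]) (R : ℝ) : Multiset ℂ :=
  p.roots.filter fun z => ‖z‖ ≤ R

noncomputable def largeRoots (p : ℂ[X]) (R : ℝ) : Multiset ℂ :=
  p.roots.filter fun z => ¬ ‖z‖ ≤ R

theorem smallRoots_mono (p : ℂ[X]) {R R' : ℝ} (h : R ≤ R') : smallRoots p R ≤ smallRoots p R' :=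
  Multiset.monotone_filter_right _ fun _ hz => hz.trans h

theorem card_smallRoots_le_natDegree (p : ℂ[X]) (R : ℝ) : (smallRoots p R).card ≤ p.natDegree :=
  (Multiset.card_le_card (Multiset.filter_le _ _)).trans (card_roots' p)

theorem smallRoots_add_largeRoots (p : ℂ[X]) (R : ℝ) :
    smallRoots p R + largeRoots p R = p.roots :=
  Multiset.filter_add_not _ _

theorem card_smallRoots_add_card_largeRoots (p : ℂ[X]) (R : ℝ) :
    (smallRoots p R).card + (largeRoots p R).card = p.natDegree := by
  rw [← Multiset.card_add, smallRoots_add_largeRoots, IsAlgClosed.card_roots_eq_natDegree]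

theorem prod_smallRoots_mul_prod_largeRoots (p : ℂ[X]) (R : ℝ) :
    ((smallRoots p R).map fun β => X - C β).prod *
      (C p.leadingCoeff * ((largeRoots p R).map fun β => X - C β).prod) = p := by
  conv_rhs => rw [← C_leadingCoeff_mul_prod_multiset_X_sub_C (p := p)
    IsAlgClosed.card_roots_eq_natDegree, ← smallRoots_add_largeRoots p R]
  rw [Multiset.map_add, Multiset.prod_add]
  ring

theorem prod_map_max_norm_smallRoots (p : ℂ[X]) {R₁ R : ℝ} (hR : R₁ ≤ R) :
    ((smallRoots p R₁).map fun β => max ‖β‖ R).prod = R ^ (smallRoots p R₁).card := by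
  rw [Multiset.map_congr rfl fun β hβ => max_eq_right ((Multiset.mem_filter.1 hβ).2.trans hR)]
  simp

theorem roots_gap_of_card_smallRoots_le {p : ℂ[X]} {R₁ R₂ : ℝ} (hR : R₁ ≤ R₂)
    (h : (smallRoots p R₂).card ≤ (smallRoots p R₁).card) :
    ∀ β ∈ p.roots, ‖β‖ ≤ R₁ ∨ R₂ < ‖β‖ := by
  have heq := Multiset.eq_of_le_of_card_le (smallRoots_mono p hR) h
  intro β hβ
  by_contra! hc
  have hβ₂ : β ∈ smallRoots p R₂ := Multiset.mem_filter.2 ⟨hβ, hc.2⟩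
  rw [← heq] at hβ₂
  exact (Multiset.mem_filter.1 hβ₂).2.not_gt hc.1

theorem lt_norm_of_mem_largeRoots {p : ℂ[X]} {R₁ R₂ : ℝ}
    (hgap : ∀ β ∈ p.roots, ‖β‖ ≤ R₁ ∨ R₂ < ‖β‖) {β : ℂ} (hβ : β ∈ largeRoots p R₁) :
    R₂ < ‖β‖ :=
  (hgap β (Multiset.mem_filter.1 hβ).1).resolve_left (Multiset.mem_filter.1 hβ).2

theorem prod_map_max_norm_largeRoots {p : ℂ[X]} {R₁ R₂ R : ℝ}
    (hgap : ∀ β ∈ p.roots, ‖β‖ ≤ R₁ ∨ R₂ < ‖β‖) (hR : R ≤ R₂) :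
    ((largeRoots p R₁).map fun β => max ‖β‖ R).prod = ((largeRoots p R₁).map fun β => ‖β‖).prod :=
  congrArg _ <| Multiset.map_congr rfl fun _ hβ =>
    max_eq_left (hR.trans (lt_norm_of_mem_largeRoots hgap hβ).le)

theorem norm_coeff_mul_pow_le_of_roots_gap {p : ℂ[X]} {R₁ R₂ R : ℝ}
    (hgap : ∀ β ∈ p.roots, ‖β‖ ≤ R₁ ∨ R₂ < ‖β‖) (hR : R ∈ Set.Icc R₁ R₂) (hR₁ : 0 ≤ R₁) (k : ℕ) :
    ‖p.coeff k‖ * R ^ k ≤ 2 ^ p.natDegree *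
      (‖p.leadingCoeff‖ * ((largeRoots p R₁).map fun β => ‖β‖).prod) *
        R ^ (smallRoots p R₁).card := by
  have h := norm_coeff_prod_X_sub_C_mul_pow_le (smallRoots p R₁ + largeRoots p R₁)
    (hR₁.trans hR.1) k
  rw [Multiset.map_add (fun β => max ‖β‖ R), Multiset.prod_add, prod_map_max_norm_smallRoots p hR.1,
    prod_map_max_norm_largeRoots hgap hR.2, Multiset.card_add,
    card_smallRoots_add_card_largeRoots, smallRoots_add_largeRoots] at h
  conv_lhs => rw [← C_leadingCoeff_mul_prod_multiset_X_sub_C (p := p)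
    IsAlgClosed.card_roots_eq_natDegree,
    coeff_C_mul, norm_mul, mul_assoc]
  calc _ ≤ ‖p.leadingCoeff‖ * (2 ^ p.natDegree * (R ^ (smallRoots p R₁).card *
        ((largeRoots p R₁).map fun β => ‖β‖).prod)) := by gcongr
    _ = _ := by ring

theorem norm_coeff_card_smallRoots_ge_of_roots_gap {p : ℂ[X]} {R₁ R₂ : ℝ}
    (hgap : ∀ β ∈ p.roots, ‖β‖ ≤ R₁ ∨ R₂ < ‖β‖) (hR₁ : 0 < R₁)
    (hR : 4 ^ (p.natDegree + 1) * R₁ ≤ R₂) :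
    ‖p.leadingCoeff‖ * ((largeRoots p R₁).map fun β => ‖β‖).prod / 2 ≤
      ‖p.coeff (smallRoots p R₁).card‖ := by
  set N := p.natDegree
  set s := (smallRoots p R₁).card
  set W := ‖p.leadingCoeff‖ * ((largeRoots p R₁).map fun β => ‖β‖).prod
  set f := ((smallRoots p R₁).map fun β => X - C β).prod
  set g := C p.leadingCoeff * ((largeRoots p R₁).map fun β => X - C β).prod
  have hR12 : R₁ ≤ R₂ := le_trans (le_mul_of_one_le_left hR₁.le (one_le_pow₀ (by norm_num))) hR
  have hR₂ : 0 < R₂ := hR₁.trans_le hR12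
  have hfdeg : f.natDegree = s := natDegree_multiset_prod_X_sub_C_eq_card _
  have hf : ∀ i, ‖f.coeff i‖ * R₁ ^ i ≤ 2 ^ s * R₁ ^ f.natDegree := fun i => by
    rw [hfdeg, ← prod_map_max_norm_smallRoots p le_rfl]
    exact norm_coeff_prod_X_sub_C_mul_pow_le _ hR₁.le i
  have hg : ∀ l, ‖g.coeff l‖ * R₂ ^ l ≤ 2 ^ (largeRoots p R₁).card * W := fun l => by
    have h := norm_coeff_prod_X_sub_C_mul_pow_le (largeRoots p R₁) hR₂.le l
    rw [prod_map_max_norm_largeRoots hgap le_rfl] at h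
    rw [coeff_C_mul, norm_mul, mul_assoc]
    calc _ ≤ ‖p.leadingCoeff‖ * (2 ^ (largeRoots p R₁).card *
          ((largeRoots p R₁).map fun β => ‖β‖).prod) := by gcongr
      _ = _ := by ring
  have hclose := norm_coeff_natDegree_mul_sub_coeff_zero_mul_le
    (monic_multiset_prod_of_monic _ _ fun β _ => monic_X_sub_C β) hR₁ hR12 hf hg
  rw [prod_smallRoots_mul_prod_largeRoots, hfdeg, ← mul_assoc (2 ^ _), ← pow_add,
    card_smallRoots_add_card_largeRoots] at hclose
  have hg0 : ‖g.coeff 0‖ = W := by rw [coeff_C_mul, norm_mul, norm_coeff_zero_prod_X_sub_C]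
  have hW : 0 ≤ W := hg0 ▸ norm_nonneg _
  have hsN : (s : ℝ) ≤ 2 ^ N := by
    exact_mod_cast ((card_smallRoots_le_natDegree p R₁).trans N.lt_two_pow_self.le)
  have hdiff : ‖p.coeff s - g.coeff 0‖ ≤ W / 2 := by
    refine le_of_mul_le_mul_right (hclose.trans ?_) hR₂
    calc (s : ℝ) * (2 ^ N * W * R₁) ≤ 2 ^ N * (2 ^ N * W * R₁) := by gcongr
      _ = W / 4 * (4 ^ (N + 1) * R₁) := by
        rw [pow_succ, show (4 : ℝ) ^ N = 2 ^ N * 2 ^ N by rw [← mul_pow]; norm_num]; ring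
      _ ≤ W / 2 * R₂ := by nlinarith
  linarith [norm_sub_norm_le (g.coeff 0) (p.coeff s), norm_sub_rev (g.coeff 0) (p.coeff s)]

theorem card_smallRoots_eq_of_roots_gap {p : ℂ[X]} {d m : ℕ} (hd : p.natDegree ≤ d)
    {R₁ R₂ L δ K : ℝ} (hR₁ : 0 < R₁) (hR : 4 ^ (d + 1) * R₁ ≤ R₂) (hR₂ : R₂ ≤ 1)
    (hgap : ∀ β ∈ p.roots, ‖β‖ ≤ R₁ ∨ R₂ < ‖β‖)
    (hm : L ≤ ‖p.coeff m‖) (hδ : ∀ k < m, ‖p.coeff k‖ ≤ δ) (hK : ∀ k ≤ d, ‖p.coeff k‖ ≤ K)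
    (hLδ : 2 ^ (d + 1) * δ < L * R₂ ^ m) (hLK : 2 ^ (d + 1) * K * R₁ < L) :
    (smallRoots p R₁).card = m := by
  set s := (smallRoots p R₁).card
  set W := ‖p.leadingCoeff‖ * ((largeRoots p R₁).map fun β => ‖β‖).prod
  have hR12 : R₁ ≤ R₂ := le_trans (le_mul_of_one_le_left hR₁.le (one_le_pow₀ (by norm_num))) hR
  have hlow : W / 2 ≤ ‖p.coeff s‖ :=
    norm_coeff_card_smallRoots_ge_of_roots_gap hgap hR₁ (le_trans (by gcongr; norm_num) hR)
  have hW : 0 ≤ W := mul_nonneg (norm_nonneg _) <| Multiset.prod_nonneg fun _ hx => by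
    obtain ⟨β, -, rfl⟩ := Multiset.mem_map.1 hx
    exact norm_nonneg β
  have hupper : ∀ R ∈ Set.Icc R₁ R₂, ‖p.coeff m‖ * R ^ m ≤ 2 ^ d * W * R ^ s := fun R hR =>
    (norm_coeff_mul_pow_le_of_roots_gap hgap hR hR₁.le m).trans <| by
      have : 0 ≤ R := hR₁.le.trans hR.1
      gcongr; norm_num
  have hsd : s ≤ d := (card_smallRoots_le_natDegree p R₁).trans hd
  rcases lt_trichotomy s m with hsm | hsm | hsm
  · have hδ0 : 0 ≤ δ := (norm_nonneg _).trans (hδ s hsm)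
    have hR₂0 : 0 ≤ R₂ := hR₁.le.trans hR12
    have : L * R₂ ^ m ≤ 2 ^ (d + 1) * δ :=
      calc L * R₂ ^ m ≤ ‖p.coeff m‖ * R₂ ^ m := by gcongr
        _ ≤ 2 ^ d * W * R₂ ^ s := hupper R₂ ⟨hR12, le_rfl⟩
        _ ≤ 2 ^ d * (2 * δ) * 1 := by
          gcongr
          · linarith [hδ s hsm]
          · exact pow_le_one₀ hR₂0 hR₂
        _ = 2 ^ (d + 1) * δ := by ring
    linarith
  · exact hsm
  · have hK0 : 0 ≤ K := (norm_nonneg _).trans (hK 0 d.zero_le)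
    have hsplit : R₁ ^ s = R₁ ^ (s - m - 1) * R₁ * R₁ ^ m := by
      rw [← pow_succ, ← pow_add]; congr 1; omega
    have : L * R₁ ^ m ≤ 2 ^ (d + 1) * K * R₁ * R₁ ^ m :=
      calc L * R₁ ^ m ≤ ‖p.coeff m‖ * R₁ ^ m := by gcongr
        _ ≤ 2 ^ d * W * R₁ ^ s := hupper R₁ ⟨le_rfl, hR12⟩
        _ ≤ 2 ^ d * (2 * K) * (1 * R₁ * R₁ ^ m) := by
          rw [hsplit]
          gcongr
          · linarith [hK s hsd]
          · exact pow_le_one₀ hR₁.le (hR12.trans hR₂)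
        _ = 2 ^ (d + 1) * K * R₁ * R₁ ^ m := by ring
    linarith [le_of_mul_le_mul_right this (pow_pos hR₁ m)]

theorem Antitone.exists_succ_eq {f : ℕ → ℕ} (hf : Antitone f) {d : ℕ} (hd : f 0 ≤ d) :
    ∃ j ≤ d, f (j + 1) = f j := by
  by_contra! h
  have hdrop : ∀ j ≤ d + 1, f j + j ≤ f 0 := by
    intro j hj
    induction j with
    | zero => simp
    | succ j ih =>
      have := (hf (Nat.le_add_right j 1)).lt_of_ne (h j (by omega))
      have := ih (by omega)
      omega
  have := hdrop (d + 1) le_rfl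
  omega

theorem exists_card_smallRoots_eq_of_dominant {p : ℂ[X]} {d m : ℕ} (hd : p.natDegree ≤ d)
    {u q L δ K : ℝ} (hu : 0 < u) (hu1 : u ≤ 1) (hq : 0 < q) (hq4 : 4 ^ (d + 1) * q ≤ 1)
    (hL : 0 < L) (hm : L ≤ ‖p.coeff m‖) (hδ : ∀ k < m, ‖p.coeff k‖ ≤ δ)
    (hK : ∀ k ≤ d, ‖p.coeff k‖ ≤ K)
    (hLδ : 2 ^ (d + 1) * δ < L * (u * q ^ d) ^ m) (hLK : 2 ^ (d + 1) * K * (u * q) < L) :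
    ∃ j ≤ d, (smallRoots p (u * q ^ (j + 1))).card = m := by
  have hq1 : q ≤ 1 := le_trans (le_mul_of_one_le_left hq.le (one_le_pow₀ (by norm_num))) hq4
  have hanti : Antitone fun j => (smallRoots p (u * q ^ j)).card := fun i j hij =>
    Multiset.card_le_card <| smallRoots_mono p <| by
      gcongr u * ?_; exact pow_le_pow_of_le_one hq.le hq1 hij
  obtain ⟨j, hjd, hj⟩ := hanti.exists_succ_eq ((card_smallRoots_le_natDegree p _).trans hd)
  refine ⟨j, hjd, card_smallRoots_eq_of_roots_gap hd (by positivity) ?_ ?_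
    (roots_gap_of_card_smallRoots_le ?_ hj.ge) hm hδ hK ?_ ?_⟩
  · calc 4 ^ (d + 1) * (u * q ^ (j + 1)) = (4 ^ (d + 1) * q) * (u * q ^ j) := by ring
      _ ≤ 1 * (u * q ^ j) := by gcongr
      _ = u * q ^ j := one_mul _
  · exact mul_le_one₀ hu1 (by positivity) (pow_le_one₀ hq.le hq1)
  · gcongr u * ?_; exact pow_le_pow_of_le_one hq.le hq1 (Nat.le_add_right j 1)
  · refine hLδ.trans_le ?_
    gcongr L * (u * ?_) ^ m
    exact pow_le_pow_of_le_one hq.le hq1 hjd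
  · refine lt_of_le_of_lt ?_ hLK
    have hK0 : 0 ≤ K := (norm_nonneg _).trans (hK 0 d.zero_le)
    gcongr
    exact pow_le_of_le_one hq.le hq1 j.succ_ne_zero

theorem card_smallRoots_eq_of_dominant {p : ℂ[X]} {d m : ℕ} (hd : p.natDegree ≤ d)
    {R q L δ K : ℝ} (hR : 0 < R) (hRq : R ≤ q ^ (d + 1)) (hq : 0 < q) (hq4 : 4 ^ (d + 1) * q ≤ 1)
    (hL : 0 < L) (hm : L ≤ ‖p.coeff m‖) (hδ : ∀ k < m, ‖p.coeff k‖ ≤ δ)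
    (hK : ∀ k ≤ d, ‖p.coeff k‖ ≤ K)
    (hLδ : 2 ^ (d + 1) * δ < L * (R * q ^ d) ^ m) (hLK : 2 ^ (d + 1) * K * R < L * q ^ d) :
    (smallRoots p R).card = m := by
  have hq1 : q ≤ 1 := le_trans (le_mul_of_one_le_left hq.le (one_le_pow₀ (by norm_num))) hq4
  have hK0 : 0 ≤ K := (norm_nonneg _).trans (hK 0 d.zero_le)
  have hqd : 0 < q ^ d := pow_pos hq d
  obtain ⟨j₁, -, hj₁⟩ := exists_card_smallRoots_eq_of_dominant hd hR
    (hRq.trans (pow_le_one₀ hq.le hq1)) hq hq4 hL hm hδ hK hLδ <| by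
      calc 2 ^ (d + 1) * K * (R * q) ≤ 2 ^ (d + 1) * K * (R * 1) := by gcongr
        _ < L * q ^ d := by rwa [mul_one]
        _ ≤ L * 1 := by gcongr; exact pow_le_one₀ hq.le hq1
        _ = L := mul_one L
  -- the radii `u * q ^ (j + 1)`, `j ≤ d`, of the second family all lie above `R`
  set u := R / q ^ (d + 1)
  have hu : 0 < u := by positivity
  have hRu : R = u * q ^ (d + 1) := (div_mul_cancel₀ R (pow_pos hq _).ne').symm
  have hLδ' : 2 ^ (d + 1) * δ < L * (u * q ^ d) ^ m := by
    refine hLδ.trans_le ?_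
    gcongr L * ?_ ^ m
    calc R * q ^ d ≤ R * 1 := by gcongr; exact pow_le_one₀ hq.le hq1
      _ ≤ u * q ^ d := by
        rw [hRu, mul_one, pow_succ, ← mul_assoc]
        exact mul_le_of_le_one_right (by positivity) hq1
  have hLK' : 2 ^ (d + 1) * K * (u * q) < L :=
    calc 2 ^ (d + 1) * K * (u * q) = 2 ^ (d + 1) * K * R / q ^ d := by
          rw [hRu, pow_succ]; field_simp; ring
      _ < L := by rwa [div_lt_iff₀ hqd]
  obtain ⟨j₂, hj₂d, hj₂⟩ := exists_card_smallRoots_eq_of_dominant hd hu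
    ((div_le_one (by positivity)).2 hRq) hq hq4 hL hm hδ hK hLδ' hLK'
  refine le_antisymm ?_ ?_
  · rw [← hj₂, hRu]
    exact Multiset.card_le_card (smallRoots_mono p (by
      gcongr u * ?_; exact pow_le_pow_of_le_one hq.le hq1 (by omega)))
  · rw [← hj₁]
    exact Multiset.card_le_card (smallRoots_mono p (mul_le_of_le_one_right hR.le
      (pow_le_one₀ hq.le hq1)))

theorem Real.mul_rpow_lt_rpow_of_mul_lt {a b c t : ℝ} (ha : 0 ≤ a) (hc : 1 ≤ c) (ht : 1 ≤ t)
    (h : c * a < b) : c * a ^ t < b ^ t :=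
  calc c * a ^ t ≤ c ^ t * a ^ t := by gcongr; exact Real.self_le_rpow_of_one_le hc ht
    _ = (c * a) ^ t := (Real.mul_rpow (by linarith) ha).symm
    _ < b ^ t := Real.rpow_lt_rpow (by positivity) h (by linarith)

theorem Real.le_rpow_one_div_of_rpow_le {x M ε : ℝ} (hx : 0 ≤ x) (hM : 0 ≤ M) (hε : 0 < ε)
    (h : x ^ ε ≤ M) : x ≤ M ^ (1 / ε) := by
  rwa [one_div, Real.le_rpow_inv_iff_of_pos hx hM hε]

theorem norm_coeff_X_pow_mul_add_bounds {d m : ℕ} {Q H : ℂ[X]} {ε ρ K δ : ℝ}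
    (hε : ε ∈ Set.Ioc 0 1) (hρ : 0 < ρ) (hQ0 : ρ ≤ ‖Q.coeff 0‖ ^ ε)
    (hQK : ∀ k ≤ d, ‖Q.coeff k‖ ^ ε ≤ K) (hHK : ∀ k ≤ d, ‖H.coeff k‖ ^ ε ≤ K)
    (hHδ : ∀ k ≤ m, ‖H.coeff k‖ ^ ε ≤ δ) (hδρ : δ ≤ ρ / 2) :
    (ρ / 2) ^ (1 / ε) ≤ ‖(X ^ m * Q + H).coeff m‖ ∧
      (∀ k < m, ‖(X ^ m * Q + H).coeff k‖ ≤ δ ^ (1 / ε)) ∧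
      ∀ k ≤ d, ‖(X ^ m * Q + H).coeff k‖ ≤ (2 * K) ^ (1 / ε) := by
  obtain ⟨hε0, hε1⟩ := hε
  have ht : 1 ≤ 1 / ε := one_le_one_div hε0 hε1
  have hK0 : 0 ≤ K := (by positivity : (0 : ℝ) ≤ ‖Q.coeff 0‖ ^ ε).trans (hQK 0 d.zero_le)
  have hδ0 : 0 ≤ δ := (by positivity : (0 : ℝ) ≤ ‖H.coeff 0‖ ^ ε).trans (hHδ 0 m.zero_le)
  have hcoeff : ∀ k, (X ^ m * Q + H).coeff k = (if m ≤ k then Q.coeff (k - m) else 0) + H.coeff k :=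
    fun k => by simp [coeff_X_pow_mul']
  refine ⟨?_, fun k hk => ?_, fun k hk => ?_⟩
  · have hQ0' : ρ ^ (1 / ε) ≤ ‖Q.coeff 0‖ := by
      rwa [one_div, Real.rpow_inv_le_iff_of_pos hρ.le (norm_nonneg _) hε0]
    have hρt : 2 * (ρ / 2) ^ (1 / ε) ≤ ρ ^ (1 / ε) :=
      calc 2 * (ρ / 2) ^ (1 / ε) ≤ 2 ^ (1 / ε) * (ρ / 2) ^ (1 / ε) := by
            gcongr; exact Real.self_le_rpow_of_one_le (by norm_num) ht
        _ = ρ ^ (1 / ε) := by rw [← Real.mul_rpow (by norm_num) (by positivity)]; ring_nf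
    have hHm : ‖H.coeff m‖ ≤ (ρ / 2) ^ (1 / ε) :=
      (Real.le_rpow_one_div_of_rpow_le (norm_nonneg _) hδ0 hε0 (hHδ m le_rfl)).trans (by gcongr)
    rw [hcoeff, if_pos le_rfl, Nat.sub_self]
    have := norm_sub_le (Q.coeff 0 + H.coeff m) (H.coeff m)
    rw [add_sub_cancel_right] at this
    linarith
  · rw [hcoeff, if_neg (by omega), zero_add]
    exact Real.le_rpow_one_div_of_rpow_le (norm_nonneg _) hδ0 hε0 (hHδ k hk.le)
  · have hQk : ‖if m ≤ k then Q.coeff (k - m) else 0‖ ≤ K ^ (1 / ε) := by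
      split_ifs
      · exact Real.le_rpow_one_div_of_rpow_le (norm_nonneg _) hK0 hε0 (hQK _ (by omega))
      · rw [norm_zero]; positivity
    calc ‖(X ^ m * Q + H).coeff k‖ ≤ K ^ (1 / ε) + K ^ (1 / ε) := by
          rw [hcoeff]
          exact (norm_add_le _ _).trans (add_le_add hQk
            (Real.le_rpow_one_div_of_rpow_le (norm_nonneg _) hK0 hε0 (hHK k hk)))
      _ ≤ 2 ^ (1 / ε) * K ^ (1 / ε) := by
          rw [← two_mul]; gcongr; exact Real.self_le_rpow_of_one_le (by norm_num) ht
      _ = (2 * K) ^ (1 / ε) := (Real.mul_rpow (by norm_num) hK0).symm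

theorem card_smallRoots_X_pow_mul_add_eq_of_rpow_bounds {d m : ℕ} (hmd : m ≤ d) {Q H : ℂ[X]}
    (hQ : Q.natDegree ≤ d - m) (hH : H.natDegree ≤ d) {ε ρ K δ r w : ℝ} (hε : ε ∈ Set.Ioc 0 1)
    (hρ : 0 < ρ) (hQ0 : ρ ≤ ‖Q.coeff 0‖ ^ ε) (hQK : ∀ k ≤ d, ‖Q.coeff k‖ ^ ε ≤ K)
    (hHK : ∀ k ≤ d, ‖H.coeff k‖ ^ ε ≤ K) (hHδ : ∀ k ≤ m, ‖H.coeff k‖ ^ ε ≤ δ)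
    (hw : 0 < w) (hw4 : 4 ^ (d + 1) * w ≤ 1) (hr : 0 < r) (hrw : r ≤ w ^ (d + 1))
    (hrK : 2 ^ (d + 2) * K * r < ρ / 2 * w ^ d)
    (hδ : 2 ^ (d + 1) * δ < ρ / 2 * (r * w ^ d) ^ m) :
    (smallRoots (X ^ m * Q + H) (r ^ (1 / ε))).card = m := by
  have ht : 1 ≤ 1 / ε := one_le_one_div hε.1 hε.2
  have hw1 : w ≤ 1 := le_trans (le_mul_of_one_le_left hw.le (one_le_pow₀ (by norm_num))) hw4
  have hK0 : 0 ≤ K := (by positivity : (0 : ℝ) ≤ ‖Q.coeff 0‖ ^ ε).trans (hQK 0 d.zero_le)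
  have hδ0 : 0 ≤ δ := (by positivity : (0 : ℝ) ≤ ‖H.coeff 0‖ ^ ε).trans (hHδ 0 m.zero_le)
  have hδρ : δ ≤ ρ / 2 := by
    have hrw1 : r * w ^ d ≤ 1 :=
      mul_le_one₀ (hrw.trans (pow_le_one₀ hw.le hw1)) (by positivity) (pow_le_one₀ hw.le hw1)
    have : ρ / 2 * (r * w ^ d) ^ m ≤ ρ / 2 := mul_le_of_le_one_right (by positivity)
      (pow_le_one₀ (by positivity) hrw1)
    nlinarith [one_le_pow₀ (show (1 : ℝ) ≤ 2 by norm_num) (n := d + 1)]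
  obtain ⟨hm, hsmall, hbig⟩ := norm_coeff_X_pow_mul_add_bounds hε hρ hQ0 hQK hHK hHδ hδρ
  have hdeg : (X ^ m * Q + H).natDegree ≤ d := natDegree_add_le_of_degree_le
    ((natDegree_mul_le.trans (add_le_add (natDegree_X_pow_le m) hQ)).trans (by omega)) hH
  refine card_smallRoots_eq_of_dominant (q := w ^ (1 / ε)) hdeg (by positivity) ?_ (by positivity)
    ?_ (by positivity) hm hsmall hbig ?_ ?_
  · rw [Real.rpow_pow_comm hw.le]
    exact Real.rpow_le_rpow hr.le hrw (by positivity)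
  · calc 4 ^ (d + 1) * w ^ (1 / ε) ≤ 4 ^ (d + 1) * w := by
          gcongr; exact Real.rpow_le_self_of_le_one hw.le hw1 ht
      _ ≤ 1 := hw4
  · rw [Real.rpow_pow_comm hw.le, ← Real.mul_rpow hr.le (by positivity),
      Real.rpow_pow_comm (by positivity), ← Real.mul_rpow (by positivity) (by positivity)]
    exact Real.mul_rpow_lt_rpow_of_mul_lt hδ0 (one_le_pow₀ (by norm_num)) ht hδ
  · rw [mul_assoc, ← Real.mul_rpow (by positivity) hr.le, Real.rpow_pow_comm hw.le,
      ← Real.mul_rpow (by positivity) (by positivity)]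
    refine Real.mul_rpow_lt_rpow_of_mul_lt (by positivity) (one_le_pow₀ (by norm_num)) ht ?_
    calc 2 ^ (d + 1) * (2 * K * r) = 2 ^ (d + 2) * K * r := by ring
      _ < ρ / 2 * w ^ d := hrK

theorem exists_radius_card_smallRoots_X_pow_mul_add_eq {d m : ℕ} (hmd : m ≤ d) {ρ K : ℝ}
    (hρ : 0 < ρ) (hρK : ρ ≤ K) :
    ∃ r₀ ∈ Set.Ioo (0 : ℝ) 1, ∀ r ∈ Set.Ioc 0 r₀, ∃ δ > 0, ∀ ε ∈ Set.Ioc (0 : ℝ) 1,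
      ∀ Q H : ℂ[X], Q.natDegree ≤ d - m → H.natDegree ≤ d → ρ ≤ ‖Q.coeff 0‖ ^ ε →
        (∀ k ≤ d, ‖Q.coeff k‖ ^ ε ≤ K) → (∀ k ≤ d, ‖H.coeff k‖ ^ ε ≤ K) →
        (∀ k ≤ m, ‖H.coeff k‖ ^ ε ≤ δ) → (smallRoots (X ^ m * Q + H) (r ^ (1 / ε))).card = m := by
  set w : ℝ := (4 ^ (d + 1))⁻¹
  have hw : 0 < w := by positivity
  have hw4 : 4 ^ (d + 1) * w = 1 := mul_inv_cancel₀ (by positivity)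
  have hw1 : w < 1 := inv_lt_one_of_one_lt₀ (one_lt_pow₀ (by norm_num) d.succ_ne_zero)
  have hK : 0 < K := hρ.trans_le hρK
  have h2 : (1 : ℝ) < 2 ^ (d + 3) := one_lt_pow₀ (by norm_num) (by omega)
  have hwd : w ^ (d + 1) < w ^ d := pow_lt_pow_right_of_lt_one₀ hw hw1 d.lt_succ_self
  have hwd1 : w ^ (d + 1) ≤ 1 := pow_le_one₀ hw.le hw1.le
  set r₀ := ρ * w ^ (d + 1) / (2 ^ (d + 3) * K)
  have hr₀w : r₀ ≤ w ^ (d + 1) := by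
    rw [div_le_iff₀ (by positivity)]
    have : ρ ≤ 2 ^ (d + 3) * K := by nlinarith
    nlinarith [mul_le_mul_of_nonneg_left this (pow_pos hw (d + 1)).le]
  refine ⟨r₀, ⟨by positivity, hr₀w.trans_lt (hwd.trans_le (pow_le_one₀ hw.le hw1.le))⟩, ?_⟩
  rintro r ⟨hr, hrr₀⟩
  refine ⟨ρ / 2 * (r * w ^ d) ^ m / 2 ^ (d + 2), by positivity, ?_⟩
  intro ε hε Q H hQ hH hQ0 hQK hHK hHδ
  refine card_smallRoots_X_pow_mul_add_eq_of_rpow_bounds hmd hQ hH hε hρ hQ0 hQK hHK hHδ hw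
    hw4.le hr (hrr₀.trans hr₀w) ?_ ?_
  · calc 2 ^ (d + 2) * K * r ≤ 2 ^ (d + 2) * K * r₀ := by gcongr
      _ = ρ / 2 * w ^ (d + 1) := by simp only [r₀]; field_simp; ring
      _ < ρ / 2 * w ^ d := by gcongr
  · have hpos : 0 < ρ / 2 * (r * w ^ d) ^ m := by positivity
    have : (2 : ℝ) ^ (d + 1) * (ρ / 2 * (r * w ^ d) ^ m / 2 ^ (d + 2)) =
        ρ / 2 * (r * w ^ d) ^ m / 2 := by
      field_simp; ring
    linarith

theorem Multiset.exists_fin_map_eq {α : Type*} (s : Multiset α) {m : ℕ} (hs : Multiset.card s = m) :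
    ∃ f : Fin m → α, Finset.univ.val.map f = s := by
  subst hs
  refine ⟨fun i => s.toList[i.1]'(by simp), ?_⟩
  rw [Fin.univ_val_map]
  conv_rhs => rw [← Multiset.coe_toList s]
  congr 1
  exact List.ext_getElem (by simp) (by simp)

theorem exists_roots_tendsto_of_card_smallRoots_eq {ι : Type*} {l : Filter ι} {P : ι → ℂ[X]}
    {ε : ι → ℝ} (hε : ∀ n, 0 < ε n) {m : ℕ} {r₀ : ℝ} (hr₀ : 0 < r₀)
    (h : ∀ r ∈ Set.Ioc 0 r₀, ∀ᶠ n in l, (smallRoots (P n) (r ^ (1 / ε n))).card = m) :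
    ∃ α : Fin m → ι → ℂ, (∀ i, Tendsto (fun n => ‖α i n‖ ^ ε n) l (nhds 0)) ∧
      ∀ᶠ n in l, (∏ i, (X - C (α i n))) ∣ P n := by
  have hα : ∀ n, ∃ a : Fin m → ℂ, (smallRoots (P n) (r₀ ^ (1 / ε n))).card = m →
      Finset.univ.val.map a = smallRoots (P n) (r₀ ^ (1 / ε n)) := by
    intro n
    by_cases hn : (smallRoots (P n) (r₀ ^ (1 / ε n))).card = m
    · obtain ⟨a, ha⟩ := Multiset.exists_fin_map_eq _ hn
      exact ⟨a, fun _ => ha⟩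
    · exact ⟨0, fun h => absurd h hn⟩
  choose α hα using hα
  have hsmall : ∀ i, ∀ r ∈ Set.Ioc 0 r₀, ∀ᶠ n in l, ‖α n i‖ ^ ε n ≤ r := by
    intro i r hr
    filter_upwards [h r hr, h r₀ ⟨hr₀, le_rfl⟩] with n hn hn₀
    have heq : smallRoots (P n) (r ^ (1 / ε n)) = smallRoots (P n) (r₀ ^ (1 / ε n)) :=
      Multiset.eq_of_le_of_card_le
        (smallRoots_mono _ (Real.rpow_le_rpow hr.1.le hr.2 (by have := hε n; positivity)))
        (hn₀.trans hn.symm).le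
    have hmem : α n i ∈ smallRoots (P n) (r ^ (1 / ε n)) := by
      rw [heq, ← hα n hn₀]
      exact Multiset.mem_map_of_mem _ (Finset.mem_univ_val _)
    calc ‖α n i‖ ^ ε n ≤ (r ^ (1 / ε n)) ^ ε n :=
          Real.rpow_le_rpow (norm_nonneg _) (Multiset.mem_filter.1 hmem).2 (hε n).le
      _ = r := by rw [← Real.rpow_mul hr.1.le, one_div_mul_cancel (hε n).ne', Real.rpow_one]
  refine ⟨fun i n => α n i, fun i => ?_, ?_⟩
  · refine tendsto_order.2 ⟨fun a ha => Eventually.of_forall fun n =>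
      ha.trans_le (Real.rpow_nonneg (norm_nonneg _) _), fun a ha => ?_⟩
    filter_upwards [hsmall i (min r₀ (a / 2)) ⟨by positivity, min_le_left _ _⟩] with n hn
    exact hn.trans_lt ((min_le_right _ _).trans_lt (half_lt_self ha))
  · filter_upwards [h r₀ ⟨hr₀, le_rfl⟩] with n hn
    have hmap : (Finset.univ.val.map fun i => X - C (α n i)) =
        (smallRoots (P n) (r₀ ^ (1 / ε n))).map fun a => X - C a := by
      rw [← hα n hn, Multiset.map_map]; rfl
    rw [Finset.prod_eq_multiset_prod, hmap]
    exact (Multiset.prod_dvd_prod_of_le (Multiset.map_le_map (Multiset.filter_le _ _))).trans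
      (prod_multiset_X_sub_C_dvd _)

theorem exists_le_of_forall_exists_le {ι : Type*} {f : ℕ → ι → ℝ} (h : ∀ k, ∃ M, ∀ n, f k n ≤ M)
    (d : ℕ) : ∃ M, ∀ k ≤ d, ∀ n, f k n ≤ M := by
  choose M hM using h
  exact ⟨(Finset.range (d + 1)).sup' Finset.nonempty_range_add_one M, fun k hk n =>
    (hM k n).trans (Finset.le_sup' M (Finset.mem_range.2 (by omega)))⟩

open scoped Classical in
theorem stmt_17_general (ε : ℕ → ℝ) (hε : ∀ n, ε n ∈ Set.Ioc (0 : ℝ) 1) (ω : Ultrafilter ℕ)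
    (m d : ℕ) (hmd : m ≤ d)
    (Q H : ℕ → Polynomial ℂ)
    (hQdeg : ∀ n, (Q n).natDegree ≤ d - m) (hHdeg : ∀ n, (H n).natDegree ≤ d)
    (hQbd : ∀ k, ∃ M : ℝ, ∀ n, ‖(Q n).coeff k‖ ^ ε n ≤ M)
    (hHbd : ∀ k, ∃ M : ℝ, ∀ n, ‖(H n).coeff k‖ ^ ε n ≤ M)
    (hQ0 : ∃ ρ : ℝ, 0 < ρ ∧ {n : ℕ | ρ ≤ ‖(Q n).coeff 0‖ ^ ε n} ∈ ω)
    (hH0 : ∀ k, Tendsto (fun n => ‖(H n).coeff k‖ ^ ε n) ω (nhds 0)) :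
    (∃ r₀ : ℝ, r₀ ∈ Set.Ioo (0 : ℝ) 1 ∧ ∀ r : ℝ, r ∈ Set.Ioc (0 : ℝ) r₀ →
      {n : ℕ |
        (((X ^ m * Q n + H n).roots.filter
            fun z => ‖z‖ ≤ r ^ (1 / ε n)).card : ℕ) = m} ∈ ω) ∧
    ∃ α : Fin m → ℕ → ℂ,
      (∀ i, Tendsto (fun n => ‖α i n‖ ^ ε n) ω (nhds 0)) ∧
      {n : ℕ | (∏ i : Fin m, (X - C (α i n))) ∣ (X ^ m * Q n + H n)} ∈ ω := by
  obtain ⟨ρ, hρ, hQρ⟩ := hQ0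
  obtain ⟨KQ, hKQ⟩ := exists_le_of_forall_exists_le hQbd d
  obtain ⟨KH, hKH⟩ := exists_le_of_forall_exists_le hHbd d
  have hρK : ρ ≤ max KQ KH := by
    obtain ⟨n, hn⟩ := ω.nonempty_of_mem hQρ
    exact hn.trans ((hKQ 0 d.zero_le n).trans (le_max_left _ _))
  obtain ⟨r₀, hr₀, hcount⟩ := exists_radius_card_smallRoots_X_pow_mul_add_eq hmd hρ hρK
  have key : ∀ r ∈ Set.Ioc 0 r₀, ∀ᶠ n in (ω : Filter ℕ),
      (smallRoots (X ^ m * Q n + H n) (r ^ (1 / ε n))).card = m := by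
    intro r hr
    obtain ⟨δ, hδ, hcount_r⟩ := hcount r hr
    have hHδ : ∀ᶠ n in (ω : Filter ℕ), ∀ k ≤ m, ‖(H n).coeff k‖ ^ ε n ≤ δ :=
      (eventually_all_finite (Set.finite_Iic m)).2 fun k _ => (hH0 k).eventually (ge_mem_nhds hδ)
    filter_upwards [Ultrafilter.mem_coe.2 hQρ, hHδ] with n hn hnδ
    exact hcount_r (ε n) (hε n) (Q n) (H n) (hQdeg n) (hHdeg n) hn
      (fun k hk => (hKQ k hk n).trans (le_max_left _ _))
      (fun k hk => (hKH k hk n).trans (le_max_right _ _)) hnδ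
  exact ⟨⟨r₀, hr₀, key⟩, exists_roots_tendsto_of_card_smallRoots_eq (fun n => (hε n).1) hr₀.1 key⟩

open scoped Classical in
/-- Let P_n(z) = z^m Q_n(z) + H_n(z) be a sequence of complex polynomials of degree ≤ d
with coefficients in A^ε, where the coefficients of H tend to 0 along ω in the seminorm
|·|_ω and |Q_ω(0)| ≠ 0. Then for all sufficiently small r ∈ (0,1), for an ω-big set of n
the polynomial P_n has exactly m zeros (with multiplicity) in {|z| ≤ r^{1/ε_n}};
consequently there are m sequences of zeros α_{i,n} of P_n with ∏ᵢ (z - α_{i,n})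
dividing P_n for an ω-big set of n and lim_ω |α_{i,n}|^{ε_n} = 0. -/
theorem stmt_17 (ε : ℕ → ℝ) (hε : ∀ n, ε n ∈ Set.Ioc (0 : ℝ) 1) (ω : Ultrafilter ℕ)
    (hnp : ∀ n : ℕ, ω ≠ pure n) (h0 : Tendsto ε ω (nhds 0))
    (m d : ℕ) (hmd : m ≤ d)
    (Q H : ℕ → Polynomial ℂ)
    (hQdeg : ∀ n, (Q n).natDegree ≤ d - m) (hHdeg : ∀ n, (H n).natDegree ≤ d)
    (hQbd : ∀ k, ∃ M : ℝ, ∀ n, ‖(Q n).coeff k‖ ^ ε n ≤ M)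
    (hHbd : ∀ k, ∃ M : ℝ, ∀ n, ‖(H n).coeff k‖ ^ ε n ≤ M)
    (hQ0 : ∃ ρ : ℝ, 0 < ρ ∧ {n : ℕ | ρ ≤ ‖(Q n).coeff 0‖ ^ ε n} ∈ ω)
    (hH0 : ∀ k, Tendsto (fun n => ‖(H n).coeff k‖ ^ ε n) ω (nhds 0)) :
    (∃ r₀ : ℝ, r₀ ∈ Set.Ioo (0 : ℝ) 1 ∧ ∀ r : ℝ, r ∈ Set.Ioc (0 : ℝ) r₀ →
      {n : ℕ |
        (((X ^ m * Q n + H n).roots.filter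
            fun z => ‖z‖ ≤ r ^ (1 / ε n)).card : ℕ) = m} ∈ ω) ∧
    ∃ α : Fin m → ℕ → ℂ,
      (∀ i, Tendsto (fun n => ‖α i n‖ ^ ε n) ω (nhds 0)) ∧
      {n : ℕ | (∏ i : Fin m, (X - C (α i n))) ∣ (X ^ m * Q n + H n)} ∈ ω :=
  stmt_17_general ε hε ω m d hmd Q H hQdeg hHdeg hQbd hHbd hQ0 hH0
end

section
/- Let (z_n), (w_n) be sequences in ℂ defining elements z, w of A^ε for a sequence ε = (ε_n) in (0,1], and let ω be an ultrafilter on ℕ with lim_ω ε_n = 0. Then the ε_n-th powers of the spherical (chordal) distances converge to the non-Archimedean projective distance: lim_ω ( |z_n - w_n| / (√(|z_n|²+1) · √(|w_n|²+1)) )^{ε_n} = |z_ω - w_ω|_ω / (max(|z_ω|_ω, 1) · max(|w_ω|_ω, 1)), where z_ω, w_ω denote the images of z, w in the residue field H(ω) with norm |x|_ω = lim_ω |x_n|^{ε_n}. -/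
/-!
Since `max |z| 1 ≤ √(|z|² + 1) ≤ 2 · max |z| 1` and `2 ^ εₙ → 1`, the factor `√(|zₙ|² + 1) ^ εₙ`
is squeezed between two sequences tending to `max (lim_ω |zₙ| ^ εₙ) 1`; the chordal distance is a
quotient of such factors, and `(a / b) ^ ε = a ^ ε / b ^ ε`.
-/

open Filter Topology

lemma Real.max_one_rpow {a e : ℝ} (ha : 0 ≤ a) (he : 0 ≤ e) :
    max a 1 ^ e = max (a ^ e) 1 := by
  rcases le_total a 1 with h | h
  · rw [max_eq_right h, max_eq_right (Real.rpow_le_one ha h he), Real.one_rpow]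
  · rw [max_eq_left h, max_eq_left (Real.one_le_rpow h he)]

lemma Real.max_one_le_sqrt_sq_add_one (a : ℝ) : max a 1 ≤ √(a ^ 2 + 1) :=
  max_le (Real.le_sqrt_of_sq_le (by linarith)) (Real.le_sqrt_of_sq_le (by nlinarith))

lemma Real.sqrt_sq_add_one_le_two_mul_max_one {a : ℝ} (ha : 0 ≤ a) :
    √(a ^ 2 + 1) ≤ 2 * max a 1 := by
  rw [Real.sqrt_le_left (by positivity)]
  rcases le_total a 1 with h | h
  · rw [max_eq_right h]; nlinarith
  · rw [max_eq_left h]; nlinarith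

section

variable {ι : Type*} {l : Filter ι} {ε x : ι → ℝ} {L : ℝ}

lemma Filter.Tendsto.max_one_rpow (hL : Tendsto (fun i => x i ^ ε i) l (𝓝 L))
    (hε : ∀ i, 0 ≤ ε i) (hx : ∀ i, 0 ≤ x i) :
    Tendsto (fun i => max (x i) 1 ^ ε i) l (𝓝 (max L 1)) := by
  simp only [Real.max_one_rpow (hx _) (hε _)]
  exact hL.max tendsto_const_nhds

lemma Filter.Tendsto.sqrt_sq_add_one_rpow (hL : Tendsto (fun i => x i ^ ε i) l (𝓝 L))
    (hε : ∀ i, 0 ≤ ε i) (h0 : Tendsto ε l (𝓝 0)) (hx : ∀ i, 0 ≤ x i) :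
    Tendsto (fun i => √(x i ^ 2 + 1) ^ ε i) l (𝓝 (max L 1)) := by
  have hmax := hL.max_one_rpow hε hx
  have htwo : Tendsto (fun i => (2 : ℝ) ^ ε i) l (𝓝 1) := by
    simpa using tendsto_const_nhds.rpow h0 (Or.inl two_ne_zero)
  have hupper : Tendsto (fun i => (2 * max (x i) 1) ^ ε i) l (𝓝 (max L 1)) := by
    simp only [Real.mul_rpow zero_le_two (zero_le_one.trans (le_max_right _ _))]
    simpa using htwo.mul hmax
  refine tendsto_of_tendsto_of_tendsto_of_le_of_le hmax hupper (fun i => ?_) (fun i => ?_)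
  · exact Real.rpow_le_rpow (zero_le_one.trans (le_max_right _ _))
      (Real.max_one_le_sqrt_sq_add_one _) (hε i)
  · exact Real.rpow_le_rpow (Real.sqrt_nonneg _)
      (Real.sqrt_sq_add_one_le_two_mul_max_one (hx i)) (hε i)

end

theorem stmt_19_general (ε : ℕ → ℝ) (hε : ∀ n, ε n ∈ Set.Ioc (0 : ℝ) 1) (ω : Ultrafilter ℕ)
    (h0 : Tendsto ε ω (nhds 0))
    (z w : ℕ → ℂ)
    (Lz Lw Lzw : ℝ)
    (hLz : Tendsto (fun n => ‖z n‖ ^ ε n) ω (nhds Lz))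
    (hLw : Tendsto (fun n => ‖w n‖ ^ ε n) ω (nhds Lw))
    (hLzw : Tendsto (fun n => ‖z n - w n‖ ^ ε n) ω (nhds Lzw)) :
    Tendsto
      (fun n => (‖z n - w n‖ /
        (Real.sqrt (‖z n‖ ^ 2 + 1) *
          Real.sqrt (‖w n‖ ^ 2 + 1))) ^ ε n)
      ω (nhds (Lzw / (max Lz 1 * max Lw 1))) := by
  have hε₀ : ∀ n, 0 ≤ ε n := fun n => (hε n).1.le
  have hden := (hLz.sqrt_sq_add_one_rpow hε₀ h0 fun n => norm_nonneg _).mul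
    (hLw.sqrt_sq_add_one_rpow hε₀ h0 fun n => norm_nonneg _)
  refine (hLzw.div hden (by positivity)).congr fun n => ?_
  rw [Pi.div_apply, Real.div_rpow (norm_nonneg _) (by positivity),
    Real.mul_rpow (Real.sqrt_nonneg _) (Real.sqrt_nonneg _)]

/-- For z, w ∈ A^ε and an ultrafilter ω with lim_ω ε_n = 0, the ε_n-th powers of the
spherical (chordal) distances converge along ω to the non-Archimedean projective
distance: with |z_ω| = lim_ω |z_n|^{ε_n}, |w_ω| = lim_ω |w_n|^{ε_n} and
|z_ω - w_ω| = lim_ω |z_n - w_n|^{ε_n}, one has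
lim_ω (|z_n - w_n|/(√(|z_n|²+1)·√(|w_n|²+1)))^{ε_n}
  = |z_ω - w_ω| / (max(|z_ω|,1) · max(|w_ω|,1)). -/
theorem stmt_19 (ε : ℕ → ℝ) (hε : ∀ n, ε n ∈ Set.Ioc (0 : ℝ) 1) (ω : Ultrafilter ℕ)
    (h0 : Tendsto ε ω (nhds 0))
    (z w : ℕ → ℂ)
    (hz : ∃ M : ℝ, ∀ n, ‖z n‖ ^ ε n ≤ M)
    (hw : ∃ M : ℝ, ∀ n, ‖w n‖ ^ ε n ≤ M)
    (Lz Lw Lzw : ℝ)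
    (hLz : Tendsto (fun n => ‖z n‖ ^ ε n) ω (nhds Lz))
    (hLw : Tendsto (fun n => ‖w n‖ ^ ε n) ω (nhds Lw))
    (hLzw : Tendsto (fun n => ‖z n - w n‖ ^ ε n) ω (nhds Lzw)) :
    Tendsto
      (fun n => (‖z n - w n‖ /
        (Real.sqrt (‖z n‖ ^ 2 + 1) *
          Real.sqrt (‖w n‖ ^ 2 + 1))) ^ ε n)
      ω (nhds (Lzw / (max Lz 1 * max Lw 1))) :=
  stmt_19_general ε hε ω h0 z w Lz Lw Lzw hLz hLw hLzw
end
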